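/- arXiv:2510.07937 — 4 statements merged into one kernel-verified Lean document; each statement's English description precedes it below -/
import Mathlib

section
/- There exists a constant C, depending only on T, α, M, E, K, such that every smooth positive solution of the cross-diffusion system on [0,T] with potentials V, W ∈ C³(𝕋) and data bounds (M, E, B, K) satisfies ∫₀^T ∫_𝕋 S(t,x)^{2−α} dx dt ≤ C, where S = ρ + μ. -/
open MeasureTheory Real Set Filter
open scoped ContDiff

noncomputable section

/-- Partial derivative with respect to the time variable (first argument). -/
def pt (f : ℝ → ℝ → ℝ) (t x : ℝ) : ℝ := deriv (fun s => f s x) t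

/-- Partial derivative with respect to the space variable (second argument). -/
def px (f : ℝ → ℝ → ℝ) (t x : ℝ) : ℝ := deriv (fun y => f t y) x

/-- A smooth positive solution of the cross-diffusion system
`∂ₜρ = ∂ₓ(ρ·αS^(α-2)∂ₓS) + ∂ₓ(ρ∂ₓV)`, `∂ₜμ = ∂ₓ(μ·αS^(α-2)∂ₓS) + ∂ₓ(μ∂ₓW)` (S = ρ+μ)
on [0,T]×𝕋, where the torus 𝕋 = ℝ/ℤ is modeled by 1-periodic functions on ℝ. -/
structure CrossDiffSol (T α : ℝ) (V W : ℝ → ℝ) (ρ μ : ℝ → ℝ → ℝ) : Prop where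
  smooth_rho : ContDiff ℝ (⊤ : ℕ∞) (Function.uncurry ρ)
  smooth_mu : ContDiff ℝ (⊤ : ℕ∞) (Function.uncurry μ)
  periodic_rho : ∀ t, Function.Periodic (ρ t) 1
  periodic_mu : ∀ t, Function.Periodic (μ t) 1
  pos_rho : ∀ t x, 0 < ρ t x
  pos_mu : ∀ t x, 0 < μ t x
  smooth_V : ContDiff ℝ 3 V
  smooth_W : ContDiff ℝ 3 W
  periodic_V : Function.Periodic V 1
  periodic_W : Function.Periodic W 1
  eq_rho : ∀ t ∈ Set.Icc (0:ℝ) T, ∀ x : ℝ,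
    pt ρ t x =
      px (fun s y => ρ s y * (α * (ρ s y + μ s y) ^ (α - 2) *
        px (fun s' y' => ρ s' y' + μ s' y') s y)) t x
      + px (fun s y => ρ s y * deriv V y) t x
  eq_mu : ∀ t ∈ Set.Icc (0:ℝ) T, ∀ x : ℝ,
    pt μ t x =
      px (fun s y => μ s y * (α * (ρ s y + μ s y) ^ (α - 2) *
        px (fun s' y' => ρ s' y' + μ s' y') s y)) t x
      + px (fun s y => μ s y * deriv W y) t x

/-- Data bounds (M, E, B, K): mass of the initial total density at most `M`, initial entropy at
most `E`, initial BV bound `B` on `log(ρ₀/μ₀)`, and `C³` norms of the potentials at most `K`. -/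
structure DataBounds (V W : ℝ → ℝ) (ρ μ : ℝ → ℝ → ℝ) (M E B K : ℝ) : Prop where
  mass : (∫ x in (0:ℝ)..1, (ρ 0 x + μ 0 x)) ≤ M
  entropy : (∫ x in (0:ℝ)..1,
      (ρ 0 x * |Real.log (ρ 0 x)| + μ 0 x * |Real.log (μ 0 x)|)) ≤ E
  bv : (∫ x in (0:ℝ)..1, |deriv (fun y => Real.log (ρ 0 y / μ 0 y)) x|) ≤ B
  normV : ∀ x : ℝ, |V x| ≤ K ∧ |deriv V x| ≤ K ∧ |deriv (deriv V) x| ≤ K ∧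
    |deriv (deriv (deriv V)) x| ≤ K
  normW : ∀ x : ℝ, |W x| ≤ K ∧ |deriv W x| ≤ K ∧ |deriv (deriv W) x| ≤ K ∧
    |deriv (deriv (deriv W)) x| ≤ K


lemma young_aux {y θ ε : ℝ} (hy : 0 ≤ y) (hθ0 : 0 ≤ θ) (hθ1 : θ < 1) (hε : 0 < ε) :
    y ^ θ ≤ ε * y + ε ^ (-θ / (1 - θ)) := by
  have h1θ : (0:ℝ) < 1 - θ := by linarith
  have hNpos : (0:ℝ) < ε ^ (-1 / (1 - θ)) := rpow_pos_of_pos hε _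
  have hNθ : (ε ^ (-1 / (1 - θ))) ^ θ = ε ^ (-θ / (1 - θ)) := by
    rw [← Real.rpow_mul hε.le]
    ring_nf
  rcases le_or_gt y (ε ^ (-1 / (1 - θ))) with h | h
  · have h2 : y ^ θ ≤ (ε ^ (-1 / (1 - θ))) ^ θ := Real.rpow_le_rpow hy h hθ0
    have h3 : 0 ≤ ε * y := mul_nonneg hε.le hy
    rw [hNθ] at h2; linarith
  · have hy0 : 0 < y := hNpos.trans h
    have h2 : y ^ θ = y * y ^ (θ - 1) := by
      have : y ^ θ = y ^ (1 + (θ - 1)) := by ring_nf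
      rw [this, Real.rpow_add hy0, Real.rpow_one]
    have h3 : y ^ (θ - 1) ≤ (ε ^ (-1 / (1 - θ))) ^ (θ - 1) :=
      Real.rpow_le_rpow_of_nonpos hNpos h.le (by linarith)
    have h4 : (ε ^ (-1 / (1 - θ))) ^ (θ - 1) = ε := by
      rw [← Real.rpow_mul hε.le]
      rw [show -1 / (1 - θ) * (θ - 1) = 1 by field_simp; ring]
      exact Real.rpow_one ε
    have h5 : 0 < ε ^ (-θ / (1 - θ)) := rpow_pos_of_pos hε _
    have h6 : y ^ (θ - 1) ≤ ε := h4 ▸ h3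
    calc y ^ θ = y * y ^ (θ - 1) := h2
    _ ≤ y * ε := by nlinarith [Real.rpow_nonneg hy0.le (θ - 1)]
    _ ≤ ε * y + ε ^ (-θ / (1 - θ)) := by nlinarith

lemma rpow_le_one_add {y θ : ℝ} (hy : 0 ≤ y) (h0 : 0 ≤ θ) (h1 : θ ≤ 1) : y ^ θ ≤ 1 + y := by
  rcases le_or_gt y 1 with h | h
  · have := Real.rpow_le_one hy h h0
    linarith
  · calc y ^ θ ≤ y ^ (1:ℝ) := Real.rpow_le_rpow_of_exponent_le h.le h1
    _ = y := Real.rpow_one y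
    _ ≤ 1 + y := by linarith

lemma cs_interval {f g : ℝ → ℝ} (hf : Continuous f) (hg : Continuous g) :
    (∫ x in (0:ℝ)..1, f x * g x) ^ 2 ≤
      (∫ x in (0:ℝ)..1, f x ^ 2) * (∫ x in (0:ℝ)..1, g x ^ 2) := by
  set A := ∫ x in (0:ℝ)..1, f x ^ 2 with hA
  set Bq := ∫ x in (0:ℝ)..1, f x * g x with hB
  set Cq := ∫ x in (0:ℝ)..1, g x ^ 2 with hC
  have hAnn : 0 ≤ A := intervalIntegral.integral_nonneg (by norm_num) (fun x _ => sq_nonneg _)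
  have hCnn : 0 ≤ Cq := intervalIntegral.integral_nonneg (by norm_num) (fun x _ => sq_nonneg _)
  have key : ∀ l : ℝ, 0 ≤ l ^ 2 * A + 2 * l * Bq + Cq := by
    intro l
    have h0 : 0 ≤ ∫ x in (0:ℝ)..1, (l * f x + g x) ^ 2 :=
      intervalIntegral.integral_nonneg (by norm_num) (fun x _ => sq_nonneg _)
    have hif : IntervalIntegrable (fun x => f x ^ 2) volume 0 1 :=
      ((hf.pow 2).intervalIntegrable 0 1)
    have hig : IntervalIntegrable (fun x => g x ^ 2) volume 0 1 :=
      ((hg.pow 2).intervalIntegrable 0 1)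
    have hifg : IntervalIntegrable (fun x => f x * g x) volume 0 1 :=
      ((hf.mul hg).intervalIntegrable 0 1)
    have hexp : (∫ x in (0:ℝ)..1, (l * f x + g x) ^ 2)
        = l ^ 2 * A + 2 * l * Bq + Cq := by
      have : (fun x => (l * f x + g x) ^ 2)
          = fun x => l ^ 2 * f x ^ 2 + (2 * l * (f x * g x) + g x ^ 2) := by
        funext x; ring
      rw [this, intervalIntegral.integral_add ((hif.const_mul _))
        (((hifg.const_mul _)).add hig),
        intervalIntegral.integral_add ((hifg.const_mul _)) hig,
        intervalIntegral.integral_const_mul, intervalIntegral.integral_const_mul]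
      ring
    linarith [hexp ▸ h0]
  rcases eq_or_lt_of_le hAnn with hA0 | hA0
  · have hB0 : Bq = 0 := by
      by_contra hB0
      have h3 := key (-(Cq + 1) / (2 * Bq))
      rw [← hA0] at h3
      have h2 : 2 * (-(Cq + 1) / (2 * Bq)) * Bq = -(Cq + 1) := by field_simp
      nlinarith
    rw [hB0, ← hA0]; norm_num
  · have h1 := key (-(Bq / A))
    have h2 : (-(Bq / A)) ^ 2 * A + 2 * (-(Bq / A)) * Bq + Cq = Cq - Bq ^ 2 / A := by
      field_simp; ring
    rw [h2] at h1
    have h3 : Bq ^ 2 / A ≤ Cq := by linarith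
    have h4 := (div_le_iff₀ hA0).mp h3
    nlinarith

lemma param_cont {f : ℝ → ℝ → ℝ} (hf : Continuous (Function.uncurry f)) :
    Continuous fun t => ∫ x in (0:ℝ)..1, f t x :=
  intervalIntegral.continuous_parametric_intervalIntegral_of_continuous' hf 0 1

lemma param_hasDerivAt {f f' : ℝ → ℝ → ℝ}
    (hdf : ∀ t x, HasDerivAt (fun s => f s x) (f' t x) t)
    (hf : Continuous (Function.uncurry f))
    (hf' : Continuous (Function.uncurry f')) (t₀ : ℝ) :
    HasDerivAt (fun t => ∫ x in (0:ℝ)..1, f t x) (∫ x in (0:ℝ)..1, f' t₀ x) t₀ := by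
  obtain ⟨Cb, hCb⟩ := (isCompact_Icc.prod isCompact_Icc).exists_bound_of_continuousOn
    (s := Set.Icc (t₀ - 1) (t₀ + 1) ×ˢ Set.Icc (-1 : ℝ) 2) hf'.continuousOn
  refine (intervalIntegral.hasDerivAt_integral_of_dominated_loc_of_deriv_le
    (F := f) (F' := f') (bound := fun _ => Cb) (s := Metric.ball t₀ 1) (Metric.ball_mem_nhds t₀ one_pos) ?_ ?_ ?_ ?_ ?_ ?_).2
  · exact Eventually.of_forall fun t =>
      (hf.comp (Continuous.prodMk_right t)).aestronglyMeasurable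
  · exact (hf.comp (Continuous.prodMk_right t₀)).intervalIntegrable 0 1
  · exact (hf'.comp (Continuous.prodMk_right t₀)).aestronglyMeasurable
  · refine ae_of_all _ fun x hx t ht => ?_
    have hx' : x ∈ Set.Icc (-1 : ℝ) 2 := by
      rcases hx with hx
      have : x ∈ Set.Ioc (0:ℝ) 1 := by
        simpa [Set.uIoc_of_le (by norm_num : (0:ℝ) ≤ 1)] using hx
      exact ⟨by linarith [this.1], by linarith [this.2]⟩
    have ht' : t ∈ Set.Icc (t₀ - 1) (t₀ + 1) := by
      rw [Metric.mem_ball, Real.dist_eq, abs_lt] at ht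
      exact ⟨by linarith [ht.1], by linarith [ht.2]⟩
    simpa using hCb (t, x) (Set.mk_mem_prod ht' hx')
  · exact intervalIntegrable_const
  · exact ae_of_all _ fun x _ t _ => hdf t x

lemma periodic_deriv {f : ℝ → ℝ} (h : Function.Periodic f 1) :
    Function.Periodic (deriv f) 1 := by
  intro x
  have h1 : deriv (fun y => f (y + 1)) x = deriv f (x + 1) := deriv_comp_add_const f 1 x
  have h2 : (fun y => f (y + 1)) = f := h.funext
  rw [h2] at h1
  exact h1.symm

lemma sup_bound {u u' : ℝ → ℝ} (hu : ∀ x, HasDerivAt u (u' x) x) (hu' : Continuous u')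
    {x : ℝ} (hx : x ∈ Set.Icc (0:ℝ) 1) :
    u x ≤ (∫ y in (0:ℝ)..1, u y) + ∫ y in (0:ℝ)..1, |u' y| := by
  have huc : Continuous u := by
    rw [continuous_iff_continuousAt]; exact fun z => (hu z).continuousAt
  obtain ⟨y₀, hy₀, hmin⟩ := isCompact_Icc.exists_isMinOn
    (Set.nonempty_Icc.mpr (by norm_num : (0:ℝ) ≤ 1)) huc.continuousOn
  have h1 : u y₀ ≤ ∫ y in (0:ℝ)..1, u y := by
    have : (∫ y in (0:ℝ)..1, u y₀) ≤ ∫ y in (0:ℝ)..1, u y :=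
      intervalIntegral.integral_mono_on (by norm_num) intervalIntegrable_const
        (huc.intervalIntegrable 0 1) (fun z hz => hmin hz)
    simpa using this
  have h2 : u x - u y₀ = ∫ y in y₀..x, u' y :=
    (intervalIntegral.integral_eq_sub_of_hasDerivAt (fun y _ => hu y)
      (hu'.intervalIntegrable _ _)).symm
  set av : ℝ → ℝ := fun y => |u' y| with hav
  have h3 : |∫ y in y₀..x, u' y| ≤ ∫ y in (0:ℝ)..1, av y := by
    have habs : ‖∫ y in y₀..x, u' y‖ ≤ |∫ y in y₀..x, ‖u' y‖| :=
      intervalIntegral.norm_integral_le_abs_integral_norm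
    simp only [Real.norm_eq_abs] at habs
    have hsub : |∫ y in y₀..x, av y| ≤ |∫ y in (0:ℝ)..1, av y| := by
      apply intervalIntegral.abs_integral_mono_interval
      · have h01 : Set.uIoc (0:ℝ) 1 = Set.Ioc (0:ℝ) 1 := Set.uIoc_of_le (by norm_num)
        rw [h01]
        intro z hz
        rcases Set.mem_uIoc.mp hz with ⟨hz1, hz2⟩ | ⟨hz1, hz2⟩
        · exact ⟨lt_of_le_of_lt hy₀.1 hz1, hz2.trans hx.2⟩
        · exact ⟨lt_of_le_of_lt hx.1 hz1, hz2.trans hy₀.2⟩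
      · exact ae_of_all _ fun z => abs_nonneg _
      · exact (hu'.abs.intervalIntegrable 0 1)
    have hnn : 0 ≤ ∫ y in (0:ℝ)..1, av y :=
      intervalIntegral.integral_nonneg (by norm_num) (fun z _ => abs_nonneg _)
    calc |∫ y in y₀..x, u' y| ≤ |∫ y in y₀..x, av y| := habs
    _ ≤ |∫ y in (0:ℝ)..1, av y| := hsub
    _ = ∫ y in (0:ℝ)..1, av y := abs_of_nonneg hnn
  have h4 : u x - u y₀ ≤ ∫ y in (0:ℝ)..1, av y := by
    rw [h2]; exact (le_abs_self _).trans h3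
  have : u x ≤ u y₀ + ∫ y in (0:ℝ)..1, av y := by linarith
  exact this.trans (by linarith)

lemma contDiff_slice {f : ℝ → ℝ → ℝ} (hf : ContDiff ℝ (⊤ : ℕ∞) (Function.uncurry f)) (t : ℝ) :
    ContDiff ℝ (⊤ : ℕ∞) (f t) :=
  hf.comp (contDiff_const.prodMk contDiff_id)

lemma pt_hasDerivAt {f : ℝ → ℝ → ℝ} (hf : ContDiff ℝ (⊤ : ℕ∞) (Function.uncurry f)) (t x : ℝ) :
    HasDerivAt (fun s => f s x) (pt f t x) t := by
  have h : DifferentiableAt ℝ (fun s => f s x) t :=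
    by have := DifferentiableAt.comp (f := fun s : ℝ => (s, x)) t ((hf.differentiable (by simp)) (t, x)) (differentiableAt_id.prodMk (differentiableAt_const x)); exact this
  exact h.hasDerivAt

lemma px_hasDerivAt {f : ℝ → ℝ → ℝ} (hf : ContDiff ℝ (⊤ : ℕ∞) (Function.uncurry f)) (t x : ℝ) :
    HasDerivAt (fun y => f t y) (px f t x) x := by
  have h : DifferentiableAt ℝ (fun y => f t y) x :=
    by have := ((hf.differentiable (by simp)) (t, x)).comp x ((differentiableAt_const t).prodMk differentiableAt_id); exact this
  exact h.hasDerivAt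

lemma pt_eq_fderiv {f : ℝ → ℝ → ℝ} (hf : ContDiff ℝ (⊤ : ℕ∞) (Function.uncurry f)) (t x : ℝ) :
    pt f t x = fderiv ℝ (Function.uncurry f) (t, x) (1, 0) := by
  have h1 : HasFDerivAt (Function.uncurry f) (fderiv ℝ (Function.uncurry f) (t, x)) (t, x) :=
    ((hf.differentiable (by simp)) (t, x)).hasFDerivAt
  have h2 : HasDerivAt (fun s : ℝ => (s, x)) ((1:ℝ), (0:ℝ)) t :=
    (hasDerivAt_id t).prodMk (hasDerivAt_const t x)
  exact (h1.comp_hasDerivAt t h2).deriv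

lemma px_eq_fderiv {f : ℝ → ℝ → ℝ} (hf : ContDiff ℝ (⊤ : ℕ∞) (Function.uncurry f)) (t x : ℝ) :
    px f t x = fderiv ℝ (Function.uncurry f) (t, x) (0, 1) := by
  have h1 : HasFDerivAt (Function.uncurry f) (fderiv ℝ (Function.uncurry f) (t, x)) (t, x) :=
    ((hf.differentiable (by simp)) (t, x)).hasFDerivAt
  have h2 : HasDerivAt (fun y : ℝ => (t, y)) ((0:ℝ), (1:ℝ)) x :=
    (hasDerivAt_const x t).prodMk (hasDerivAt_id x)
  exact (h1.comp_hasDerivAt x h2).deriv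

lemma pt_continuous {f : ℝ → ℝ → ℝ} (hf : ContDiff ℝ (⊤ : ℕ∞) (Function.uncurry f)) :
    Continuous (fun p : ℝ × ℝ => pt f p.1 p.2) := by
  have h : Continuous (fun p : ℝ × ℝ => fderiv ℝ (Function.uncurry f) p (1, 0)) :=
    (hf.continuous_fderiv (by simp)).clm_apply continuous_const
  have he : (fun p : ℝ × ℝ => pt f p.1 p.2)
      = fun p : ℝ × ℝ => fderiv ℝ (Function.uncurry f) p (1, 0) :=
    funext fun p => pt_eq_fderiv hf p.1 p.2
  rw [he]; exact h

lemma px_continuous {f : ℝ → ℝ → ℝ} (hf : ContDiff ℝ (⊤ : ℕ∞) (Function.uncurry f)) :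
    Continuous (fun p : ℝ × ℝ => px f p.1 p.2) := by
  have h : Continuous (fun p : ℝ × ℝ => fderiv ℝ (Function.uncurry f) p (0, 1)) :=
    (hf.continuous_fderiv (by simp)).clm_apply continuous_const
  have he : (fun p : ℝ × ℝ => px f p.1 p.2)
      = fun p : ℝ × ℝ => fderiv ℝ (Function.uncurry f) p (0, 1) :=
    funext fun p => px_eq_fderiv hf p.1 p.2
  rw [he]; exact h

def Sf (ρ μ : ℝ → ℝ → ℝ) (t x : ℝ) : ℝ := ρ t x + μ t x
def Af (α : ℝ) (ρ μ : ℝ → ℝ → ℝ) (t x : ℝ) : ℝ :=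
  α * Sf ρ μ t x ^ (α - 2) * px (Sf ρ μ) t x

section Sol

variable {T α : ℝ} {V W : ℝ → ℝ} {ρ μ : ℝ → ℝ → ℝ}

namespace CrossDiffSol

variable (sol : CrossDiffSol T α V W ρ μ)
include sol

lemma S_cd : ContDiff ℝ (⊤ : ℕ∞) (Function.uncurry (Sf ρ μ)) := sol.smooth_rho.add sol.smooth_mu

lemma S_pos (t x : ℝ) : 0 < Sf ρ μ t x := add_pos (sol.pos_rho t x) (sol.pos_mu t x)

lemma S_ne (t x : ℝ) : Sf ρ μ t x ≠ 0 := (sol.S_pos t x).ne'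

lemma St_cd (t : ℝ) : ContDiff ℝ ∞ (Sf ρ μ t) :=
  (contDiff_slice sol.S_cd t).of_le (by simp)

lemma rhot_cd (t : ℝ) : ContDiff ℝ ∞ (ρ t) :=
  (contDiff_slice sol.smooth_rho t).of_le (by simp)

lemma mut_cd (t : ℝ) : ContDiff ℝ ∞ (μ t) :=
  (contDiff_slice sol.smooth_mu t).of_le (by simp)

lemma dSt_cd (t : ℝ) : ContDiff ℝ ∞ (fun x => px (Sf ρ μ) t x) :=
  (contDiff_infty_iff_deriv.mp (sol.St_cd t)).2

lemma St_periodic (t : ℝ) : Function.Periodic (Sf ρ μ t) 1 := fun x => by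
  have h1 := sol.periodic_rho t x
  have h2 := sol.periodic_mu t x
  simp only [Sf]; rw [h1, h2]

lemma dSt_periodic (t x : ℝ) : px (Sf ρ μ) t (x + 1) = px (Sf ρ μ) t x :=
  periodic_deriv (sol.St_periodic t) x

lemma Srpow_cd (t : ℝ) (c : ℝ) : ContDiff ℝ ∞ (fun x => Sf ρ μ t x ^ c) :=
  (sol.St_cd t).rpow_const_of_ne (fun x => sol.S_ne t x)

lemma At_cd (t : ℝ) : ContDiff ℝ ∞ (fun x => Af α ρ μ t x) :=
  ((contDiff_const.mul (sol.Srpow_cd t (α - 2))).mul (sol.dSt_cd t))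

lemma At_periodic (t x : ℝ) : Af α ρ μ t (x + 1) = Af α ρ μ t x := by
  simp only [Af]
  rw [sol.St_periodic t x, sol.dSt_periodic t x]

lemma derivV_cd : ContDiff ℝ 1 (deriv V) := by
  have h := contDiff_succ_iff_deriv.mp
    (sol.smooth_V.of_le (by norm_num : ((1:ℕ) + 1 : WithTop ℕ∞) ≤ 3))
  exact h.2.2

lemma derivW_cd : ContDiff ℝ 1 (deriv W) := by
  have h := contDiff_succ_iff_deriv.mp
    (sol.smooth_W.of_le (by norm_num : ((1:ℕ) + 1 : WithTop ℕ∞) ≤ 3))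
  exact h.2.2

lemma g1_cd (t : ℝ) : ContDiff ℝ 1 (fun x => ρ t x * Af α ρ μ t x) :=
  ((sol.rhot_cd t).mul (sol.At_cd t)).of_le (by norm_num)

lemma g3_cd (t : ℝ) : ContDiff ℝ 1 (fun x => μ t x * Af α ρ μ t x) :=
  ((sol.mut_cd t).mul (sol.At_cd t)).of_le (by norm_num)

lemma g2_cd (t : ℝ) : ContDiff ℝ 1 (fun x => ρ t x * deriv V x) :=
  ((sol.rhot_cd t).of_le (by norm_num)).mul sol.derivV_cd

lemma g4_cd (t : ℝ) : ContDiff ℝ 1 (fun x => μ t x * deriv W x) :=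
  ((sol.mut_cd t).of_le (by norm_num)).mul sol.derivW_cd

lemma g1_periodic (t x : ℝ) : ρ t (x+1) * Af α ρ μ t (x+1) = ρ t x * Af α ρ μ t x := by
  rw [sol.periodic_rho t x, sol.At_periodic t x]

lemma g3_periodic (t x : ℝ) : μ t (x+1) * Af α ρ μ t (x+1) = μ t x * Af α ρ μ t x := by
  rw [sol.periodic_mu t x, sol.At_periodic t x]

lemma g2_periodic (t x : ℝ) : ρ t (x+1) * deriv V (x+1) = ρ t x * deriv V x := by
  rw [sol.periodic_rho t x, periodic_deriv sol.periodic_V x]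

lemma g4_periodic (t x : ℝ) : μ t (x+1) * deriv W (x+1) = μ t x * deriv W x := by
  rw [sol.periodic_mu t x, periodic_deriv sol.periodic_W x]

lemma ptS_eq (t x : ℝ) : pt (Sf ρ μ) t x = pt ρ t x + pt μ t x :=
  ((pt_hasDerivAt sol.smooth_rho t x).add (pt_hasDerivAt sol.smooth_mu t x)).deriv

lemma ptS_sum {t : ℝ} (ht : t ∈ Set.Icc 0 T) (x : ℝ) :
    pt (Sf ρ μ) t x
      = deriv (fun y => ρ t y * Af α ρ μ t y) x
      + deriv (fun y => ρ t y * deriv V y) x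
      + deriv (fun y => μ t y * Af α ρ μ t y) x
      + deriv (fun y => μ t y * deriv W y) x := by
  have h1 := sol.eq_rho t ht x
  have h2 := sol.eq_mu t ht x
  rw [sol.ptS_eq t x, h1, h2]
  simp only [px, Sf, Af]
  ring

end CrossDiffSol

end Sol

lemma integral_deriv_of_periodic {g : ℝ → ℝ} (hg : ContDiff ℝ 1 g) (hper : g 1 = g 0) :
    (∫ x in (0:ℝ)..1, deriv g x) = 0 := by
  have h := intervalIntegral.integral_eq_sub_of_hasDerivAt (f := g) (f' := deriv g)
    (fun x _ => (hg.differentiable one_ne_zero x).hasDerivAt)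
    ((hg.continuous_deriv le_rfl).intervalIntegrable 0 1)
  rw [h, hper, sub_self]

section Sol2

variable {T α : ℝ} {V W : ℝ → ℝ} {ρ μ : ℝ → ℝ → ℝ}

namespace CrossDiffSol

variable (sol : CrossDiffSol T α V W ρ μ)
include sol

lemma int_ptS_zero {t : ℝ} (ht : t ∈ Set.Icc 0 T) :
    (∫ x in (0:ℝ)..1, pt (Sf ρ μ) t x) = 0 := by
  have e1 : (∫ x in (0:ℝ)..1, pt (Sf ρ μ) t x)
      = ∫ x in (0:ℝ)..1,
        (deriv (fun y => ρ t y * Af α ρ μ t y) x + deriv (fun y => ρ t y * deriv V y) x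
        + deriv (fun y => μ t y * Af α ρ μ t y) x + deriv (fun y => μ t y * deriv W y) x) := by
    apply intervalIntegral.integral_congr
    intro x _
    exact sol.ptS_sum ht x
  have i1 := ((sol.g1_cd t).continuous_deriv le_rfl).intervalIntegrable (μ := volume) (0:ℝ) 1
  have i2 := ((sol.g2_cd t).continuous_deriv le_rfl).intervalIntegrable (μ := volume) (0:ℝ) 1
  have i3 := ((sol.g3_cd t).continuous_deriv le_rfl).intervalIntegrable (μ := volume) (0:ℝ) 1
  have i4 := ((sol.g4_cd t).continuous_deriv le_rfl).intervalIntegrable (μ := volume) (0:ℝ) 1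
  rw [e1, intervalIntegral.integral_add (((i1.add i2).add i3)) i4,
    intervalIntegral.integral_add ((i1.add i2)) i3, intervalIntegral.integral_add i1 i2]
  have z1 : (∫ x in (0:ℝ)..1, deriv (fun y => ρ t y * Af α ρ μ t y) x) = 0 :=
    integral_deriv_of_periodic (sol.g1_cd t) (by simpa using sol.g1_periodic t 0)
  have z2 : (∫ x in (0:ℝ)..1, deriv (fun y => ρ t y * deriv V y) x) = 0 :=
    integral_deriv_of_periodic (sol.g2_cd t) (by simpa using sol.g2_periodic t 0)
  have z3 : (∫ x in (0:ℝ)..1, deriv (fun y => μ t y * Af α ρ μ t y) x) = 0 :=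
    integral_deriv_of_periodic (sol.g3_cd t) (by simpa using sol.g3_periodic t 0)
  have z4 : (∫ x in (0:ℝ)..1, deriv (fun y => μ t y * deriv W y) x) = 0 :=
    integral_deriv_of_periodic (sol.g4_cd t) (by simpa using sol.g4_periodic t 0)
  rw [z1, z2, z3, z4]; ring

lemma mass_hasDeriv (t₀ : ℝ) :
    HasDerivAt (fun t => ∫ x in (0:ℝ)..1, Sf ρ μ t x)
      (∫ x in (0:ℝ)..1, pt (Sf ρ μ) t₀ x) t₀ :=
  param_hasDerivAt (fun t x => pt_hasDerivAt sol.S_cd t x)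
    sol.S_cd.continuous (pt_continuous sol.S_cd) t₀

lemma mass_const {t : ℝ} (ht : t ∈ Set.Icc 0 T) :
    (∫ x in (0:ℝ)..1, Sf ρ μ t x) = ∫ x in (0:ℝ)..1, Sf ρ μ 0 x := by
  have hD : ∀ τ ∈ Set.uIcc (0:ℝ) t,
      HasDerivAt (fun s => ∫ x in (0:ℝ)..1, Sf ρ μ s x)
        (∫ x in (0:ℝ)..1, pt (Sf ρ μ) τ x) τ := fun τ _ => sol.mass_hasDeriv τ
  have hcont : Continuous fun τ => ∫ x in (0:ℝ)..1, pt (Sf ρ μ) τ x :=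
    param_cont (f := pt (Sf ρ μ)) (pt_continuous sol.S_cd)
  have h := intervalIntegral.integral_eq_sub_of_hasDerivAt hD (hcont.intervalIntegrable 0 t)
  have hz : (∫ τ in (0:ℝ)..t, ∫ x in (0:ℝ)..1, pt (Sf ρ μ) τ x) = 0 := by
    have : (∫ τ in (0:ℝ)..t, ∫ x in (0:ℝ)..1, pt (Sf ρ μ) τ x)
        = ∫ τ in (0:ℝ)..t, (0:ℝ) := by
      apply intervalIntegral.integral_congr
      intro τ hτ
      rw [Set.uIcc_of_le ht.1] at hτ
      exact sol.int_ptS_zero ⟨hτ.1, hτ.2.trans ht.2⟩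
    rw [this]; simp
  rw [hz] at h
  linarith

lemma H_hasDeriv (t₀ : ℝ) :
    HasDerivAt (fun t => ∫ x in (0:ℝ)..1, Sf ρ μ t x * Real.log (Sf ρ μ t x))
      (∫ x in (0:ℝ)..1, (Real.log (Sf ρ μ t₀ x) + 1) * pt (Sf ρ μ) t₀ x) t₀ := by
  apply param_hasDerivAt (f := fun t x => Sf ρ μ t x * Real.log (Sf ρ μ t x))
    (f' := fun t x => (Real.log (Sf ρ μ t x) + 1) * pt (Sf ρ μ) t x)
  · intro t x
    have h := pt_hasDerivAt sol.S_cd t x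
    have hlog := h.log (sol.S_ne t x)
    have h2 := h.mul hlog
    simp only [Pi.mul_def] at h2
    refine h2.congr_deriv ?_
    rw [mul_div_assoc', mul_div_cancel_left₀ _ (sol.S_ne t x)]
    ring
  · exact (sol.S_cd.continuous).mul
      ((sol.S_cd.continuous).log (fun p => sol.S_ne p.1 p.2))
  · exact (((sol.S_cd.continuous).log (fun p => sol.S_ne p.1 p.2)).add
      continuous_const).mul (pt_continuous sol.S_cd)

omit sol in
lemma ibp_periodic {φ φ' g : ℝ → ℝ} (hφ : ∀ x, HasDerivAt φ (φ' x) x)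
    (hφ'c : Continuous φ') (hg : ContDiff ℝ 1 g) (hperφ : φ 1 = φ 0) (hperg : g 1 = g 0) :
    (∫ x in (0:ℝ)..1, φ x * deriv g x) = -∫ x in (0:ℝ)..1, φ' x * g x := by
  have h := intervalIntegral.integral_mul_deriv_eq_deriv_mul (u := φ) (u' := φ')
    (v := g) (v' := deriv g)
    (fun x _ => hφ x) (fun x _ => (hg.differentiable one_ne_zero x).hasDerivAt)
    (hφ'c.intervalIntegrable (μ := volume) 0 1)
    ((hg.continuous_deriv le_rfl).intervalIntegrable (μ := volume) 0 1)
  rw [h, hperφ, hperg]; ring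

lemma HD_ibp {t : ℝ} (ht : t ∈ Set.Icc 0 T) :
    (∫ x in (0:ℝ)..1, (Real.log (Sf ρ μ t x) + 1) * pt (Sf ρ μ) t x)
      = -(α * ∫ x in (0:ℝ)..1, Sf ρ μ t x ^ (α - 2) * (px (Sf ρ μ) t x)^2)
        - ∫ x in (0:ℝ)..1,
            (px (Sf ρ μ) t x / Sf ρ μ t x) * (ρ t x * deriv V x + μ t x * deriv W x) := by
  have cS : Continuous (Sf ρ μ t) := (sol.St_cd t).continuous
  have cd : Continuous (fun x => px (Sf ρ μ) t x) := (sol.dSt_cd t).continuous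
  have cφ : Continuous (fun x => Real.log (Sf ρ μ t x) + 1) :=
    (cS.log (fun x => sol.S_ne t x)).add continuous_const
  have cφ' : Continuous (fun x => px (Sf ρ μ) t x / Sf ρ μ t x) :=
    cd.div cS (fun x => sol.S_ne t x)
  have hφ : ∀ x, HasDerivAt (fun x => Real.log (Sf ρ μ t x) + 1)
      (px (Sf ρ μ) t x / Sf ρ μ t x) x := by
    intro x
    exact ((px_hasDerivAt sol.S_cd t x).log (sol.S_ne t x)).add_const 1
  have hperφ : Real.log (Sf ρ μ t 1) + 1 = Real.log (Sf ρ μ t 0) + 1 := by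
    have := sol.St_periodic t 0
    norm_num at this
    rw [this]
  have cd1 := (sol.g1_cd t).continuous_deriv le_rfl
  have cd2 := (sol.g2_cd t).continuous_deriv le_rfl
  have cd3 := (sol.g3_cd t).continuous_deriv le_rfl
  have cd4 := (sol.g4_cd t).continuous_deriv le_rfl
  have i1 := (cφ.mul cd1).intervalIntegrable (μ := volume) (0:ℝ) 1
  have i2 := (cφ.mul cd2).intervalIntegrable (μ := volume) (0:ℝ) 1
  have i3 := (cφ.mul cd3).intervalIntegrable (μ := volume) (0:ℝ) 1
  have i4 := (cφ.mul cd4).intervalIntegrable (μ := volume) (0:ℝ) 1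
  simp only [Pi.mul_def] at i1 i2 i3 i4
  have e1 : (∫ x in (0:ℝ)..1, (Real.log (Sf ρ μ t x) + 1) * pt (Sf ρ μ) t x)
      = (∫ x in (0:ℝ)..1, (Real.log (Sf ρ μ t x) + 1) * deriv (fun y => ρ t y * Af α ρ μ t y) x)
      + (∫ x in (0:ℝ)..1, (Real.log (Sf ρ μ t x) + 1) * deriv (fun y => ρ t y * deriv V y) x)
      + (∫ x in (0:ℝ)..1, (Real.log (Sf ρ μ t x) + 1) * deriv (fun y => μ t y * Af α ρ μ t y) x)
      + (∫ x in (0:ℝ)..1, (Real.log (Sf ρ μ t x) + 1) * deriv (fun y => μ t y * deriv W y) x) := by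
    rw [← intervalIntegral.integral_add i1 i2, ← intervalIntegral.integral_add (i1.add i2) i3,
      ← intervalIntegral.integral_add ((i1.add i2).add i3) i4]
    apply intervalIntegral.integral_congr
    intro x _
    simp only [sol.ptS_sum ht x]
    ring
  have e2 := ibp_periodic hφ cφ' (sol.g1_cd t) hperφ (by simpa using sol.g1_periodic t 0)
  have e3 := ibp_periodic hφ cφ' (sol.g2_cd t) hperφ (by simpa using sol.g2_periodic t 0)
  have e4 := ibp_periodic hφ cφ' (sol.g3_cd t) hperφ (by simpa using sol.g3_periodic t 0)
  have e5 := ibp_periodic hφ cφ' (sol.g4_cd t) hperφ (by simpa using sol.g4_periodic t 0)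
  rw [e1, e2, e3, e4, e5]
  have j1 := (cφ'.mul ((sol.rhot_cd t).continuous.mul (sol.At_cd t).continuous)).intervalIntegrable (μ := volume) (0:ℝ) 1
  have j3 := (cφ'.mul ((sol.mut_cd t).continuous.mul (sol.At_cd t).continuous)).intervalIntegrable (μ := volume) (0:ℝ) 1
  have j2 := (cφ'.mul ((sol.rhot_cd t).continuous.mul (sol.derivV_cd.continuous))).intervalIntegrable (μ := volume) (0:ℝ) 1
  have j4 := (cφ'.mul ((sol.mut_cd t).continuous.mul (sol.derivW_cd.continuous))).intervalIntegrable (μ := volume) (0:ℝ) 1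
  simp only [Pi.mul_def] at j1 j2 j3 j4
  have f1 : (∫ x in (0:ℝ)..1, (px (Sf ρ μ) t x / Sf ρ μ t x) * (ρ t x * Af α ρ μ t x))
      + (∫ x in (0:ℝ)..1, (px (Sf ρ μ) t x / Sf ρ μ t x) * (μ t x * Af α ρ μ t x))
      = α * ∫ x in (0:ℝ)..1, Sf ρ μ t x ^ (α - 2) * (px (Sf ρ μ) t x)^2 := by
    rw [← intervalIntegral.integral_add j1 j3, ← intervalIntegral.integral_const_mul]
    apply intervalIntegral.integral_congr
    intro x _
    have hS := sol.S_pos t x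
    have hSne := sol.S_ne t x
    simp only [Af, Sf] at *
    field_simp
  have f2 : (∫ x in (0:ℝ)..1, (px (Sf ρ μ) t x / Sf ρ μ t x) * (ρ t x * deriv V x))
      + (∫ x in (0:ℝ)..1, (px (Sf ρ μ) t x / Sf ρ μ t x) * (μ t x * deriv W x))
      = ∫ x in (0:ℝ)..1,
          (px (Sf ρ μ) t x / Sf ρ μ t x) * (ρ t x * deriv V x + μ t x * deriv W x) := by
    rw [← intervalIntegral.integral_add j2 j4]
    apply intervalIntegral.integral_congr
    intro x _
    ring
  linarith [f1, f2]

omit sol in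
lemma rpow_sq_split {S c : ℝ} (hS : 0 < S) : (S ^ c) ^ 2 = S ^ (2 * c) := by
  rw [sq, ← Real.rpow_add hS]; ring_nf

def βc (α : ℝ) : ℝ := 2 * (1 - α) / (1 + α)

lemma P_bound (hα : 0 < α) (hα1 : α ≤ 1) {M : ℝ} (hM : 0 < M) {t : ℝ}
    (hm : (∫ x in (0:ℝ)..1, Sf ρ μ t x) ≤ M) :
    (∫ x in (0:ℝ)..1, Sf ρ μ t x ^ (2 - α))
      ≤ M * ((1 + M) * (1 + Real.sqrt
          (∫ x in (0:ℝ)..1, Sf ρ μ t x ^ (α - 2) * (px (Sf ρ μ) t x) ^ 2))) ^ (βc α) := by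
  have h1α : (0:ℝ) < 1 + α := by linarith
  have cS : Continuous (Sf ρ μ t) := (sol.St_cd t).continuous
  have cdx : Continuous (fun x => px (Sf ρ μ) t x) := (sol.dSt_cd t).continuous
  have hSpos : ∀ x, 0 < Sf ρ μ t x := sol.S_pos t
  have hSne : ∀ x, Sf ρ μ t x ≠ 0 := sol.S_ne t
  set Dv := ∫ x in (0:ℝ)..1, Sf ρ μ t x ^ (α - 2) * (px (Sf ρ μ) t x) ^ 2 with hDdef
  have hD0 : 0 ≤ Dv := intervalIntegral.integral_nonneg (by norm_num)
    (fun x _ => mul_nonneg (Real.rpow_nonneg (hSpos x).le _) (sq_nonneg _))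
  have hm0 : (0:ℝ) ≤ ∫ x in (0:ℝ)..1, Sf ρ μ t x :=
    intervalIntegral.integral_nonneg (by norm_num) (fun x _ => (hSpos x).le)
  -- the auxiliary function u = S^((1+α)/2)
  have hu : ∀ x, HasDerivAt (fun y => Sf ρ μ t y ^ ((1 + α) / 2))
      (px (Sf ρ μ) t x * ((1 + α) / 2) * Sf ρ μ t x ^ ((1 + α) / 2 - 1)) x :=
    fun x => (px_hasDerivAt sol.S_cd t x).rpow_const (Or.inl (hSne x))
  have hu'c : Continuous (fun x =>
      px (Sf ρ μ) t x * ((1 + α) / 2) * Sf ρ μ t x ^ ((1 + α) / 2 - 1)) :=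
    (cdx.mul continuous_const).mul (cS.rpow_const (fun x => Or.inl (hSne x)))
  -- ∫ u ≤ 1 + M
  have hIu : (∫ x in (0:ℝ)..1, Sf ρ μ t x ^ ((1 + α) / 2))
      ≤ 1 + M := by
    have step : (∫ x in (0:ℝ)..1, Sf ρ μ t x ^ ((1 + α) / 2))
        ≤ ∫ x in (0:ℝ)..1, (1 + Sf ρ μ t x) := by
      apply intervalIntegral.integral_mono_on (by norm_num)
        ((cS.rpow_const (fun x => Or.inl (hSne x))).intervalIntegrable (μ := volume) 0 1)
        ((continuous_const.add cS).intervalIntegrable (μ := volume) 0 1)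
      intro x _
      exact rpow_le_one_add (hSpos x).le (by linarith) (by linarith)
    have : (∫ x in (0:ℝ)..1, (1 + Sf ρ μ t x))
        = 1 + ∫ x in (0:ℝ)..1, Sf ρ μ t x := by
      rw [intervalIntegral.integral_add (intervalIntegrable_const)
        (cS.intervalIntegrable (μ := volume) 0 1)]
      simp
    linarith
  -- ∫ |u'| ≤ √Dv * √M  via Cauchy-Schwarz
  have hIu' : (∫ x in (0:ℝ)..1,
      |px (Sf ρ μ) t x * ((1 + α) / 2) * Sf ρ μ t x ^ ((1 + α) / 2 - 1)|)
      ≤ Real.sqrt Dv * Real.sqrt M := by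
    have hcs := cs_interval (f := fun x => Sf ρ μ t x ^ ((α - 2) / 2) * |px (Sf ρ μ) t x|)
      (g := fun x => Sf ρ μ t x ^ ((1 : ℝ) / 2))
      ((cS.rpow_const (fun x => Or.inl (hSne x))).mul cdx.abs)
      (cS.rpow_const (fun x => Or.inl (hSne x)))
    have ef : (∫ x in (0:ℝ)..1, (Sf ρ μ t x ^ ((α - 2) / 2) * |px (Sf ρ μ) t x|) ^ 2)
        = Dv := by
      apply intervalIntegral.integral_congr
      intro x _
      simp only
      rw [mul_pow, sq_abs, rpow_sq_split (hSpos x)]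
      ring_nf
    have eg : (∫ x in (0:ℝ)..1, (Sf ρ μ t x ^ ((1:ℝ) / 2)) ^ 2)
        = ∫ x in (0:ℝ)..1, Sf ρ μ t x := by
      apply intervalIntegral.integral_congr
      intro x _
      simp only
      rw [rpow_sq_split (hSpos x)]
      norm_num
    rw [ef, eg] at hcs
    have habs : (∫ x in (0:ℝ)..1,
        |px (Sf ρ μ) t x * ((1 + α) / 2) * Sf ρ μ t x ^ ((1 + α) / 2 - 1)|)
        ≤ ∫ x in (0:ℝ)..1, (Sf ρ μ t x ^ ((α - 2) / 2) * |px (Sf ρ μ) t x|)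
            * (Sf ρ μ t x ^ ((1:ℝ) / 2)) := by
      apply intervalIntegral.integral_mono_on (by norm_num)
        (hu'c.abs.intervalIntegrable (μ := volume) 0 1)
        ((((cS.rpow_const (fun x => Or.inl (hSne x))).mul cdx.abs).mul
          (cS.rpow_const (fun x => Or.inl (hSne x)))).intervalIntegrable (μ := volume) 0 1)
      intro x _
      have e1 : Sf ρ μ t x ^ ((α - 2) / 2) * Sf ρ μ t x ^ ((1:ℝ) / 2)
          = Sf ρ μ t x ^ ((1 + α) / 2 - 1) := by
        rw [← Real.rpow_add (hSpos x)]
        ring_nf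
      have e2 : (Sf ρ μ t x ^ ((α - 2) / 2) * |px (Sf ρ μ) t x|)
            * (Sf ρ μ t x ^ ((1:ℝ) / 2))
          = |px (Sf ρ μ) t x| * Sf ρ μ t x ^ ((1 + α) / 2 - 1) := by
        rw [← e1]; ring
      simp only [Pi.mul_apply]
      rw [e2, abs_mul, abs_mul]
      rw [abs_of_nonneg (Real.rpow_nonneg (hSpos x).le ((1 + α) / 2 - 1)),
        abs_of_nonneg (by positivity : (0:ℝ) ≤ (1 + α) / 2)]
      have hb : |px (Sf ρ μ) t x| * ((1 + α) / 2) ≤ |px (Sf ρ μ) t x| * 1 := by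
        apply mul_le_mul_of_nonneg_left (by linarith) (abs_nonneg _)
      have hrn : (0:ℝ) ≤ Sf ρ μ t x ^ ((1 + α) / 2 - 1) :=
        Real.rpow_nonneg (hSpos x).le _
      nlinarith [abs_nonneg (px (Sf ρ μ) t x)]
    have hInn : 0 ≤ ∫ x in (0:ℝ)..1,
        (Sf ρ μ t x ^ ((α - 2) / 2) * |px (Sf ρ μ) t x|) * (Sf ρ μ t x ^ ((1:ℝ) / 2)) :=
      intervalIntegral.integral_nonneg (by norm_num) (fun x _ => mul_nonneg
        (mul_nonneg (Real.rpow_nonneg (hSpos x).le _) (abs_nonneg _))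
        (Real.rpow_nonneg (hSpos x).le _))
    have hle : (∫ x in (0:ℝ)..1,
        (Sf ρ μ t x ^ ((α - 2) / 2) * |px (Sf ρ μ) t x|) * (Sf ρ μ t x ^ ((1:ℝ) / 2)))
        ≤ Real.sqrt Dv * Real.sqrt M := by
      rw [← Real.sqrt_mul hD0]
      rw [Real.le_sqrt hInn (by nlinarith)]
      calc (∫ x in (0:ℝ)..1,
          (Sf ρ μ t x ^ ((α - 2) / 2) * |px (Sf ρ μ) t x|) * (Sf ρ μ t x ^ ((1:ℝ) / 2))) ^ 2
          ≤ Dv * ∫ x in (0:ℝ)..1, Sf ρ μ t x := hcs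
        _ ≤ Dv * M := by nlinarith
    linarith
  -- pointwise bound u ≤ (1+M)(1+√Dv) on [0,1]
  have hub : ∀ x ∈ Set.Icc (0:ℝ) 1, Sf ρ μ t x ^ ((1 + α) / 2)
      ≤ (1 + M) * (1 + Real.sqrt Dv) := by
    intro x hx
    have h := sup_bound hu hu'c hx
    have hsM : Real.sqrt M ≤ 1 + M := by
      nlinarith [Real.sq_sqrt hM.le, Real.sqrt_nonneg M]
    have hsD : 0 ≤ Real.sqrt Dv := Real.sqrt_nonneg Dv
    nlinarith [Real.sqrt_nonneg M]
  -- conclude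
  have hRpos : 0 < (1 + M) * (1 + Real.sqrt Dv) := by
    have := Real.sqrt_nonneg Dv
    nlinarith
  have hβ0 : 0 ≤ βc α := by
    unfold βc
    apply div_nonneg (by linarith) (by linarith)
  have hfinal : ∀ x ∈ Set.Icc (0:ℝ) 1, Sf ρ μ t x ^ (2 - α)
      ≤ Sf ρ μ t x * ((1 + M) * (1 + Real.sqrt Dv)) ^ (βc α) := by
    intro x hx
    have e1 : Sf ρ μ t x ^ (2 - α) = Sf ρ μ t x * Sf ρ μ t x ^ (1 - α) := by
      nth_rewrite 2 [← Real.rpow_one (Sf ρ μ t x)]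
      rw [← Real.rpow_add (hSpos x)]
      ring_nf
    have e2 : Sf ρ μ t x ^ (1 - α) = (Sf ρ μ t x ^ ((1 + α) / 2)) ^ (βc α) := by
      rw [← Real.rpow_mul (hSpos x).le]
      unfold βc
      congr 1
      field_simp
    rw [e1, e2]
    apply mul_le_mul_of_nonneg_left _ (hSpos x).le
    exact Real.rpow_le_rpow (Real.rpow_nonneg (hSpos x).le _) (hub x hx) hβ0
  have hint : (∫ x in (0:ℝ)..1, Sf ρ μ t x ^ (2 - α))
      ≤ ∫ x in (0:ℝ)..1, Sf ρ μ t x * ((1 + M) * (1 + Real.sqrt Dv)) ^ (βc α) := by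
    apply intervalIntegral.integral_mono_on (by norm_num)
      ((cS.rpow_const (fun x => Or.inl (hSne x))).intervalIntegrable (μ := volume) 0 1)
      ((cS.mul continuous_const).intervalIntegrable (μ := volume) 0 1)
    exact hfinal
  have hmul : (∫ x in (0:ℝ)..1, Sf ρ μ t x * ((1 + M) * (1 + Real.sqrt Dv)) ^ (βc α))
      = (∫ x in (0:ℝ)..1, Sf ρ μ t x) * ((1 + M) * (1 + Real.sqrt Dv)) ^ (βc α) := by
    exact intervalIntegral.integral_mul_const _ _
  rw [hmul] at hint
  have hRβ : 0 ≤ ((1 + M) * (1 + Real.sqrt Dv)) ^ (βc α) := Real.rpow_nonneg hRpos.le _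
  calc (∫ x in (0:ℝ)..1, Sf ρ μ t x ^ (2 - α))
      ≤ (∫ x in (0:ℝ)..1, Sf ρ μ t x) * ((1 + M) * (1 + Real.sqrt Dv)) ^ (βc α) := hint
    _ ≤ M * ((1 + M) * (1 + Real.sqrt Dv)) ^ (βc α) := by nlinarith

def θcc (α : ℝ) : ℝ := (2 + βc α) / 4
def aC (α M K : ℝ) : ℝ := K * Real.sqrt (M * (1 + M) ^ (βc α))
def KpC (α M K : ℝ) : ℝ := 2 * aC α M K
def C3C (α M K : ℝ) : ℝ :=
  α / 2 + KpC α M K * (α / (2 * KpC α M K)) ^ (-(θcc α) / (1 - θcc α))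

omit sol in
lemma βc_lt_two {α : ℝ} (hα : 0 < α) (hα1 : α ≤ 1) : βc α < 2 := by
  unfold βc
  rw [div_lt_iff₀ (by linarith : (0:ℝ) < 1 + α)]
  linarith

omit sol in
lemma βc_nonneg {α : ℝ} (hα : 0 < α) (hα1 : α ≤ 1) : 0 ≤ βc α :=
  div_nonneg (by linarith) (by linarith)

omit sol in
lemma θcc_lt_one {α : ℝ} (hα : 0 < α) (hα1 : α ≤ 1) : θcc α < 1 := by
  have := βc_lt_two hα hα1
  unfold θcc
  linarith

omit sol in
lemma θcc_nonneg {α : ℝ} (hα : 0 < α) (hα1 : α ≤ 1) : 0 ≤ θcc α := by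
  have := βc_nonneg hα hα1
  unfold θcc
  linarith

omit sol in
lemma aC_pos {α M K : ℝ} (hM : 0 < M) (hK : 0 < K) : 0 < aC α M K := by
  unfold aC
  apply mul_pos hK
  apply Real.sqrt_pos.mpr
  positivity

lemma HD_le {M K : ℝ} (hα : 0 < α) (hα1 : α ≤ 1) (hM : 0 < M) (hK : 0 < K)
    (hV : ∀ x, |deriv V x| ≤ K) (hW : ∀ x, |deriv W x| ≤ K)
    {t : ℝ} (ht : t ∈ Set.Icc 0 T) (hm : (∫ x in (0:ℝ)..1, Sf ρ μ t x) ≤ M) :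
    (∫ x in (0:ℝ)..1, (Real.log (Sf ρ μ t x) + 1) * pt (Sf ρ μ) t x)
      ≤ -(α / 2) * (∫ x in (0:ℝ)..1, Sf ρ μ t x ^ (α - 2) * (px (Sf ρ μ) t x) ^ 2)
        + C3C α M K := by
  have cS : Continuous (Sf ρ μ t) := (sol.St_cd t).continuous
  have cdx : Continuous (fun x => px (Sf ρ μ) t x) := (sol.dSt_cd t).continuous
  have hSpos : ∀ x, 0 < Sf ρ μ t x := sol.S_pos t
  have hSne : ∀ x, Sf ρ μ t x ≠ 0 := sol.S_ne t
  rw [sol.HD_ibp ht]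
  set Dv := ∫ x in (0:ℝ)..1, Sf ρ μ t x ^ (α - 2) * (px (Sf ρ μ) t x) ^ 2 with hDdef
  have hD0 : 0 ≤ Dv := intervalIntegral.integral_nonneg (by norm_num)
    (fun x _ => mul_nonneg (Real.rpow_nonneg (hSpos x).le _) (sq_nonneg _))
  set Xv := ∫ x in (0:ℝ)..1,
      (px (Sf ρ μ) t x / Sf ρ μ t x) * (ρ t x * deriv V x + μ t x * deriv W x) with hXdef
  set Pv := ∫ x in (0:ℝ)..1, Sf ρ μ t x ^ (2 - α) with hPdef
  have cQ : Continuous (fun x => ρ t x * deriv V x + μ t x * deriv W x) :=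
    (((sol.rhot_cd t).continuous.mul sol.derivV_cd.continuous).add
      ((sol.mut_cd t).continuous.mul sol.derivW_cd.continuous))
  have cφ' : Continuous (fun x => px (Sf ρ μ) t x / Sf ρ μ t x) :=
    cdx.div cS (fun x => hSne x)
  -- step 1 : |Xv| ≤ K ∫ |d|
  have step1 : |Xv| ≤ K * ∫ x in (0:ℝ)..1, |px (Sf ρ μ) t x| := by
    set q : ℝ → ℝ := fun x =>
      (px (Sf ρ μ) t x / Sf ρ μ t x) * (ρ t x * deriv V x + μ t x * deriv W x) with hqdef
    have h1 : ‖∫ x in (0:ℝ)..1, q x‖ ≤ |∫ x in (0:ℝ)..1, ‖q x‖| :=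
      intervalIntegral.norm_integral_le_abs_integral_norm
    simp only [Real.norm_eq_abs] at h1
    have hptw : ∀ x ∈ Set.Icc (0:ℝ) 1, |q x| ≤ K * |px (Sf ρ μ) t x| := by
      intro x _
      have hQ : |ρ t x * deriv V x + μ t x * deriv W x| ≤ K * Sf ρ μ t x := by
        have h2 := abs_add_le (ρ t x * deriv V x) (μ t x * deriv W x)
        rw [abs_mul, abs_mul, abs_of_pos (sol.pos_rho t x), abs_of_pos (sol.pos_mu t x)] at h2
        have h3 := hV x
        have h4 := hW x
        have h5 := (sol.pos_rho t x).le
        have h6 := (sol.pos_mu t x).le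
        have : ρ t x * |deriv V x| + μ t x * |deriv W x| ≤ K * (ρ t x + μ t x) := by nlinarith
        simp only [Sf]
        linarith
      rw [hqdef]
      simp only
      rw [abs_mul, abs_div, abs_of_pos (hSpos x)]
      rw [div_mul_eq_mul_div, div_le_iff₀ (hSpos x)]
      calc |px (Sf ρ μ) t x| * |ρ t x * deriv V x + μ t x * deriv W x|
          ≤ |px (Sf ρ μ) t x| * (K * Sf ρ μ t x) :=
            mul_le_mul_of_nonneg_left hQ (abs_nonneg _)
        _ = K * |px (Sf ρ μ) t x| * Sf ρ μ t x := by ring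
    have h2 : (∫ x in (0:ℝ)..1, |q x|) ≤ ∫ x in (0:ℝ)..1, K * |px (Sf ρ μ) t x| := by
      apply intervalIntegral.integral_mono_on (by norm_num)
        ((cφ'.mul cQ).abs.intervalIntegrable (μ := volume) 0 1)
        ((continuous_const.mul cdx.abs).intervalIntegrable (μ := volume) 0 1)
      exact hptw
    have h3 : 0 ≤ ∫ x in (0:ℝ)..1, |q x| :=
      intervalIntegral.integral_nonneg (by norm_num) (fun x _ => abs_nonneg _)
    rw [abs_of_nonneg h3] at h1
    rw [intervalIntegral.integral_const_mul] at h2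
    have h4 : |Xv| ≤ ∫ x in (0:ℝ)..1, |q x| := h1
    linarith
  -- step 2 : ∫|d| ≤ √Dv √Pv
  have step2 : (∫ x in (0:ℝ)..1, |px (Sf ρ μ) t x|) ≤ Real.sqrt Dv * Real.sqrt Pv := by
    have hcs := cs_interval (f := fun x => Sf ρ μ t x ^ ((α - 2) / 2) * |px (Sf ρ μ) t x|)
      (g := fun x => Sf ρ μ t x ^ ((2 - α) / 2))
      ((cS.rpow_const (fun x => Or.inl (hSne x))).mul cdx.abs)
      (cS.rpow_const (fun x => Or.inl (hSne x)))
    have ef : (∫ x in (0:ℝ)..1, (Sf ρ μ t x ^ ((α - 2) / 2) * |px (Sf ρ μ) t x|) ^ 2)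
        = Dv := by
      apply intervalIntegral.integral_congr
      intro x _
      simp only
      rw [mul_pow, sq_abs, rpow_sq_split (hSpos x)]
      ring_nf
    have eg : (∫ x in (0:ℝ)..1, (Sf ρ μ t x ^ ((2 - α) / 2)) ^ 2) = Pv := by
      apply intervalIntegral.integral_congr
      intro x _
      simp only
      rw [rpow_sq_split (hSpos x)]
      ring_nf
    have efg : (∫ x in (0:ℝ)..1,
        (Sf ρ μ t x ^ ((α - 2) / 2) * |px (Sf ρ μ) t x|) * Sf ρ μ t x ^ ((2 - α) / 2))
        = ∫ x in (0:ℝ)..1, |px (Sf ρ μ) t x| := by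
      apply intervalIntegral.integral_congr
      intro x _
      simp only
      have e1 : Sf ρ μ t x ^ ((α - 2) / 2) * Sf ρ μ t x ^ ((2 - α) / 2) = 1 := by
        rw [← Real.rpow_add (hSpos x)]
        rw [show (α - 2) / 2 + (2 - α) / 2 = 0 by ring]
        exact Real.rpow_zero _
      calc Sf ρ μ t x ^ ((α - 2) / 2) * |px (Sf ρ μ) t x| * Sf ρ μ t x ^ ((2 - α) / 2)
          = (Sf ρ μ t x ^ ((α - 2) / 2) * Sf ρ μ t x ^ ((2 - α) / 2)) * |px (Sf ρ μ) t x| := by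
            ring
        _ = |px (Sf ρ μ) t x| := by rw [e1, one_mul]
    rw [ef, eg, efg] at hcs
    have hnn : 0 ≤ ∫ x in (0:ℝ)..1, |px (Sf ρ μ) t x| :=
      intervalIntegral.integral_nonneg (by norm_num) (fun x _ => abs_nonneg _)
    have hP0 : 0 ≤ Pv := intervalIntegral.integral_nonneg (by norm_num)
      (fun x _ => Real.rpow_nonneg (hSpos x).le _)
    rw [← Real.sqrt_mul hD0]
    rw [Real.le_sqrt hnn (mul_nonneg hD0 hP0)]
    exact hcs
  -- step 3 : √Pv ≤ √(M(1+M)^β) (1+√Dv)^(β/2)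
  have hβ0 := βc_nonneg hα hα1
  have hsD := Real.sqrt_nonneg Dv
  have h1sD : (0:ℝ) < 1 + Real.sqrt Dv := by linarith
  have step3 : Real.sqrt Pv
      ≤ Real.sqrt (M * (1 + M) ^ (βc α)) * (1 + Real.sqrt Dv) ^ (βc α / 2) := by
    have hPb := sol.P_bound hα hα1 hM hm
    rw [← hPdef, ← hDdef] at hPb
    have e1 : M * ((1 + M) * (1 + Real.sqrt Dv)) ^ (βc α)
        = (M * (1 + M) ^ (βc α)) * ((1 + Real.sqrt Dv) ^ (βc α)) := by
      rw [Real.mul_rpow (by linarith) h1sD.le]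
      ring
    have h2 := Real.sqrt_le_sqrt (hPb.trans_eq e1)
    calc Real.sqrt Pv ≤ Real.sqrt ((M * (1 + M) ^ (βc α)) * (1 + Real.sqrt Dv) ^ (βc α)) := h2
      _ = Real.sqrt (M * (1 + M) ^ (βc α)) * Real.sqrt ((1 + Real.sqrt Dv) ^ (βc α)) :=
          Real.sqrt_mul (by positivity) _
      _ = Real.sqrt (M * (1 + M) ^ (βc α)) * (1 + Real.sqrt Dv) ^ (βc α / 2) := by
          have e4 : Real.sqrt ((1 + Real.sqrt Dv) ^ (βc α)) = (1 + Real.sqrt Dv) ^ (βc α / 2) := by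
            rw [Real.sqrt_eq_rpow, ← Real.rpow_mul h1sD.le]
            congr 1
            ring
          rw [e4]
  -- combine steps
  have hInt : 0 ≤ ∫ x in (0:ℝ)..1, |px (Sf ρ μ) t x| :=
    intervalIntegral.integral_nonneg (by norm_num) (fun x _ => abs_nonneg _)
  have key : |Xv| ≤ aC α M K * (1 + Real.sqrt Dv) ^ (1 + βc α / 2) := by
    have h4 : K * (∫ x in (0:ℝ)..1, |px (Sf ρ μ) t x|)
        ≤ K * (Real.sqrt Dv * (Real.sqrt (M * (1 + M) ^ (βc α))
            * (1 + Real.sqrt Dv) ^ (βc α / 2))) := by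
      apply mul_le_mul_of_nonneg_left _ hK.le
      calc (∫ x in (0:ℝ)..1, |px (Sf ρ μ) t x|) ≤ Real.sqrt Dv * Real.sqrt Pv := step2
        _ ≤ Real.sqrt Dv * (Real.sqrt (M * (1 + M) ^ (βc α))
            * (1 + Real.sqrt Dv) ^ (βc α / 2)) :=
          mul_le_mul_of_nonneg_left step3 hsD
    have h5 : Real.sqrt Dv * (1 + Real.sqrt Dv) ^ (βc α / 2)
        ≤ (1 + Real.sqrt Dv) ^ (1 + βc α / 2) := by
      have e2 : (1 + Real.sqrt Dv) ^ (1 + βc α / 2)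
          = (1 + Real.sqrt Dv) * (1 + Real.sqrt Dv) ^ (βc α / 2) := by
        rw [Real.rpow_add h1sD, Real.rpow_one]
      rw [e2]
      apply mul_le_mul_of_nonneg_right (by linarith) (Real.rpow_nonneg h1sD.le _)
    calc |Xv| ≤ K * ∫ x in (0:ℝ)..1, |px (Sf ρ μ) t x| := step1
      _ ≤ K * (Real.sqrt Dv * (Real.sqrt (M * (1 + M) ^ (βc α))
          * (1 + Real.sqrt Dv) ^ (βc α / 2))) := h4
      _ = aC α M K * (Real.sqrt Dv * (1 + Real.sqrt Dv) ^ (βc α / 2)) := by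
          unfold aC; ring
      _ ≤ aC α M K * (1 + Real.sqrt Dv) ^ (1 + βc α / 2) :=
          mul_le_mul_of_nonneg_left h5 (aC_pos hM hK).le
  -- step 6 : (1+√Dv)^(1+β/2) ≤ 2 (1+Dv)^θ
  have hθ0 := θcc_nonneg hα hα1
  have hθ1 := θcc_lt_one hα hα1
  have step6 : (1 + Real.sqrt Dv) ^ (1 + βc α / 2) ≤ 2 * (1 + Dv) ^ (θcc α) := by
    have e3 : (1 + Real.sqrt Dv) ^ (1 + βc α / 2)
        = ((1 + Real.sqrt Dv) ^ (2:ℝ)) ^ (θcc α) := by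
      rw [← Real.rpow_mul h1sD.le]
      unfold θcc
      ring_nf
    have h6 : (1 + Real.sqrt Dv) ^ (2:ℝ) ≤ 2 * (1 + Dv) := by
      rw [Real.rpow_two]
      nlinarith [Real.sq_sqrt hD0, sq_nonneg (Real.sqrt Dv - 1)]
    have h7 : ((1 + Real.sqrt Dv) ^ (2:ℝ)) ^ (θcc α) ≤ (2 * (1 + Dv)) ^ (θcc α) :=
      Real.rpow_le_rpow (Real.rpow_nonneg h1sD.le _) h6 hθ0
    have h8 : (2 * (1 + Dv)) ^ (θcc α) = 2 ^ (θcc α) * (1 + Dv) ^ (θcc α) :=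
      Real.mul_rpow (by norm_num) (by linarith)
    have h9 : (2:ℝ) ^ (θcc α) ≤ 2 := by
      have h9' := Real.rpow_le_rpow_of_exponent_le (by norm_num : (1:ℝ) ≤ 2) hθ1.le
      rwa [Real.rpow_one] at h9'
    have h10 : 0 ≤ (1 + Dv) ^ (θcc α) := Real.rpow_nonneg (by linarith) _
    rw [e3]
    calc ((1 + Real.sqrt Dv) ^ (2:ℝ)) ^ (θcc α)
        ≤ 2 ^ (θcc α) * (1 + Dv) ^ (θcc α) := by rw [← h8]; exact h7
      _ ≤ 2 * (1 + Dv) ^ (θcc α) := mul_le_mul_of_nonneg_right h9 h10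
  -- step 7 : Young
  have hKp : 0 < KpC α M K := by unfold KpC; linarith [aC_pos (α := α) hM hK]
  have hεpos : 0 < α / (2 * KpC α M K) := by positivity
  have step7 : (1 + Dv) ^ (θcc α)
      ≤ (α / (2 * KpC α M K)) * (1 + Dv)
        + (α / (2 * KpC α M K)) ^ (-(θcc α) / (1 - θcc α)) :=
    young_aux (by linarith) hθ0 hθ1 hεpos
  -- final combination
  have hXlow : -(α * Dv) - Xv ≤ -(α * Dv) + |Xv| := by
    have := neg_abs_le Xv
    linarith
  have hchain : |Xv| ≤ KpC α M K * ((α / (2 * KpC α M K)) * (1 + Dv)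
      + (α / (2 * KpC α M K)) ^ (-(θcc α) / (1 - θcc α))) := by
    calc |Xv| ≤ aC α M K * (1 + Real.sqrt Dv) ^ (1 + βc α / 2) := key
      _ ≤ aC α M K * (2 * (1 + Dv) ^ (θcc α)) :=
          mul_le_mul_of_nonneg_left step6 (aC_pos hM hK).le
      _ = KpC α M K * (1 + Dv) ^ (θcc α) := by unfold KpC; ring
      _ ≤ KpC α M K * ((α / (2 * KpC α M K)) * (1 + Dv)
          + (α / (2 * KpC α M K)) ^ (-(θcc α) / (1 - θcc α))) :=
          mul_le_mul_of_nonneg_left step7 hKp.le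
  have hsimp : KpC α M K * ((α / (2 * KpC α M K)) * (1 + Dv)) = (α / 2) * (1 + Dv) := by
    field_simp
  unfold C3C
  have expand : KpC α M K * ((α / (2 * KpC α M K)) * (1 + Dv)
      + (α / (2 * KpC α M K)) ^ (-(θcc α) / (1 - θcc α)))
      = (α / 2) * (1 + Dv)
        + KpC α M K * (α / (2 * KpC α M K)) ^ (-(θcc α) / (1 - θcc α)) := by
    rw [mul_add, hsimp]
  rw [expand] at hchain
  linarith

omit sol in
lemma xlogx_pair {a b : ℝ} (ha : 0 < a) (hb : 0 < b) :
    (a + b) * Real.log (a + b)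
      ≤ a * |Real.log a| + b * |Real.log b| + (a + b) * Real.log 2 := by
  have hab : 0 < a + b := by linarith
  have h1 : Real.log ((a + b) / (2 * a)) ≤ (a + b) / (2 * a) - 1 :=
    Real.log_le_sub_one_of_pos (by positivity)
  have h2 : Real.log ((a + b) / (2 * b)) ≤ (a + b) / (2 * b) - 1 :=
    Real.log_le_sub_one_of_pos (by positivity)
  have e1 : Real.log ((a + b) / (2 * a)) = Real.log (a + b) - Real.log 2 - Real.log a := by
    rw [Real.log_div hab.ne' (by positivity), Real.log_mul (by norm_num) ha.ne']
    ring
  have e2 : Real.log ((a + b) / (2 * b)) = Real.log (a + b) - Real.log 2 - Real.log b := by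
    rw [Real.log_div hab.ne' (by positivity), Real.log_mul (by norm_num) hb.ne']
    ring
  rw [e1] at h1
  rw [e2] at h2
  have h3 := mul_le_mul_of_nonneg_left h1 ha.le
  have h4 := mul_le_mul_of_nonneg_left h2 hb.le
  have e3 : a * ((a + b) / (2 * a) - 1) = (a + b) / 2 - a := by field_simp
  have e4 : b * ((a + b) / (2 * b) - 1) = (a + b) / 2 - b := by field_simp
  rw [e3] at h3
  rw [e4] at h4
  have h5 : a * Real.log a ≤ a * |Real.log a| :=
    mul_le_mul_of_nonneg_left (le_abs_self _) ha.le
  have h6 : b * Real.log b ≤ b * |Real.log b| :=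
    mul_le_mul_of_nonneg_left (le_abs_self _) hb.le
  nlinarith

omit sol in
lemma xlogx_lower {s : ℝ} (hs : 0 < s) : -1 ≤ s * Real.log s := by
  have h1 : Real.log s⁻¹ ≤ s⁻¹ - 1 := Real.log_le_sub_one_of_pos (by positivity)
  rw [Real.log_inv] at h1
  have h2 : s * (1 - s⁻¹) ≤ s * Real.log s := by
    apply mul_le_mul_of_nonneg_left (by linarith) hs.le
  have e1 : s * (1 - s⁻¹) = s - 1 := by field_simp
  nlinarith

lemma H0_le {M E B K : ℝ} (db : DataBounds V W ρ μ M E B K) :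
    (∫ x in (0:ℝ)..1, Sf ρ μ 0 x * Real.log (Sf ρ μ 0 x)) ≤ E + M * Real.log 2 := by
  have cρ : Continuous (ρ 0) := (sol.rhot_cd 0).continuous
  have cμ : Continuous (μ 0) := (sol.mut_cd 0).continuous
  have cS : Continuous (Sf ρ μ 0) := (sol.St_cd 0).continuous
  have cA : Continuous (fun x => ρ 0 x * |Real.log (ρ 0 x)| + μ 0 x * |Real.log (μ 0 x)|) :=
    ((cρ.mul ((cρ.log (fun x => (sol.pos_rho 0 x).ne')).abs)).add
      (cμ.mul ((cμ.log (fun x => (sol.pos_mu 0 x).ne')).abs)))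
  have step : (∫ x in (0:ℝ)..1, Sf ρ μ 0 x * Real.log (Sf ρ μ 0 x))
      ≤ ∫ x in (0:ℝ)..1,
        ((ρ 0 x * |Real.log (ρ 0 x)| + μ 0 x * |Real.log (μ 0 x)|)
          + Sf ρ μ 0 x * Real.log 2) := by
    apply intervalIntegral.integral_mono_on (by norm_num)
      ((cS.mul (cS.log (fun x => sol.S_ne 0 x))).intervalIntegrable (μ := volume) 0 1)
      ((cA.add (cS.mul continuous_const)).intervalIntegrable (μ := volume) 0 1)
    intro x _
    have := xlogx_pair (sol.pos_rho 0 x) (sol.pos_mu 0 x)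
    simp only [Sf, Pi.add_apply, Pi.mul_apply]
    linarith
  have esplit : (∫ x in (0:ℝ)..1,
      ((ρ 0 x * |Real.log (ρ 0 x)| + μ 0 x * |Real.log (μ 0 x)|) + Sf ρ μ 0 x * Real.log 2))
      = (∫ x in (0:ℝ)..1, (ρ 0 x * |Real.log (ρ 0 x)| + μ 0 x * |Real.log (μ 0 x)|))
        + (∫ x in (0:ℝ)..1, Sf ρ μ 0 x) * Real.log 2 := by
    rw [intervalIntegral.integral_add (g := fun x => Sf ρ μ 0 x * Real.log 2) (cA.intervalIntegrable (μ := volume) 0 1)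
      ((cS.mul continuous_const).intervalIntegrable (μ := volume) 0 1),
      intervalIntegral.integral_mul_const]
  have h1 := db.entropy
  have h2 : (∫ x in (0:ℝ)..1, Sf ρ μ 0 x) ≤ M := db.mass
  have hlog2 : 0 ≤ Real.log 2 := Real.log_nonneg one_le_two
  have h3 : (∫ x in (0:ℝ)..1, Sf ρ μ 0 x) * Real.log 2 ≤ M * Real.log 2 :=
    mul_le_mul_of_nonneg_right h2 hlog2
  rw [esplit] at step
  linarith

lemma HT_ge (t : ℝ) : -1 ≤ ∫ x in (0:ℝ)..1, Sf ρ μ t x * Real.log (Sf ρ μ t x) := by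
  have cS : Continuous (Sf ρ μ t) := (sol.St_cd t).continuous
  have step : (∫ x in (0:ℝ)..1, (-1 : ℝ))
      ≤ ∫ x in (0:ℝ)..1, Sf ρ μ t x * Real.log (Sf ρ μ t x) := by
    apply intervalIntegral.integral_mono_on (by norm_num) intervalIntegrable_const
      ((cS.mul (cS.log (fun x => sol.S_ne t x))).intervalIntegrable (μ := volume) 0 1)
    intro x _
    exact xlogx_lower (sol.S_pos t x)
  simpa using step

def C4C (T α M E K : ℝ) : ℝ := (2 / α) * (E + M * Real.log 2 + 1 + C3C α M K * T)
def CC (T α M E K : ℝ) : ℝ := M * (1 + M) ^ (βc α) * (3 * T + 2 * C4C T α M E K)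

lemma D_cont : Continuous (fun t => ∫ x in (0:ℝ)..1,
    Sf ρ μ t x ^ (α - 2) * (px (Sf ρ μ) t x) ^ 2) := by
  apply param_cont (f := fun t x => Sf ρ μ t x ^ (α - 2) * (px (Sf ρ μ) t x) ^ 2)
  exact ((sol.S_cd.continuous.rpow_const (fun p => Or.inl (sol.S_ne p.1 p.2))).mul
    ((px_continuous sol.S_cd).pow 2))

lemma intD_le {M E B K : ℝ} (hT : 0 < T) (hα : 0 < α) (hα1 : α ≤ 1) (hM : 0 < M)
    (hK : 0 < K) (db : DataBounds V W ρ μ M E B K) :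
    (∫ t in (0:ℝ)..T, ∫ x in (0:ℝ)..1, Sf ρ μ t x ^ (α - 2) * (px (Sf ρ μ) t x) ^ 2)
      ≤ C4C T α M E K := by
  have hmt : ∀ t ∈ Set.Icc (0:ℝ) T, (∫ x in (0:ℝ)..1, Sf ρ μ t x) ≤ M :=
    by
      intro t ht
      have h0 : (∫ x in (0:ℝ)..1, Sf ρ μ 0 x) ≤ M := db.mass
      rw [sol.mass_const ht]
      exact h0
  have hHDcont : Continuous (fun t => ∫ x in (0:ℝ)..1,
      (Real.log (Sf ρ μ t x) + 1) * pt (Sf ρ μ) t x) := by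
    apply param_cont (f := fun t x => (Real.log (Sf ρ μ t x) + 1) * pt (Sf ρ μ) t x)
    exact (((sol.S_cd.continuous).log (fun p => sol.S_ne p.1 p.2)).add
      continuous_const).mul (pt_continuous sol.S_cd)
  have hDc := sol.D_cont
  have hH := intervalIntegral.integral_eq_sub_of_hasDerivAt
    (f := fun t => ∫ x in (0:ℝ)..1, Sf ρ μ t x * Real.log (Sf ρ μ t x))
    (f' := fun t => ∫ x in (0:ℝ)..1, (Real.log (Sf ρ μ t x) + 1) * pt (Sf ρ μ) t x)
    (fun t _ => sol.H_hasDeriv t) (hHDcont.intervalIntegrable (μ := volume) 0 T)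
  have hmono : (∫ t in (0:ℝ)..T, ∫ x in (0:ℝ)..1,
      (Real.log (Sf ρ μ t x) + 1) * pt (Sf ρ μ) t x)
      ≤ ∫ t in (0:ℝ)..T,
        (-(α / 2) * (∫ x in (0:ℝ)..1, Sf ρ μ t x ^ (α - 2) * (px (Sf ρ μ) t x) ^ 2)
          + C3C α M K) := by
    apply intervalIntegral.integral_mono_on hT.le
      (hHDcont.intervalIntegrable (μ := volume) 0 T)
      (((continuous_const.mul hDc).add continuous_const).intervalIntegrable (μ := volume) 0 T)
    intro t ht
    exact sol.HD_le hα hα1 hM hK (fun x => (db.normV x).2.1) (fun x => (db.normW x).2.1)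
      ht (hmt t ht)
  have hrhs : (∫ t in (0:ℝ)..T,
      (-(α / 2) * (∫ x in (0:ℝ)..1, Sf ρ μ t x ^ (α - 2) * (px (Sf ρ μ) t x) ^ 2)
        + C3C α M K))
      = -(α / 2) * (∫ t in (0:ℝ)..T, ∫ x in (0:ℝ)..1,
          Sf ρ μ t x ^ (α - 2) * (px (Sf ρ μ) t x) ^ 2) + C3C α M K * T := by
    rw [intervalIntegral.integral_add (f := fun t => -(α / 2) * (∫ x in (0:ℝ)..1, Sf ρ μ t x ^ (α - 2) * (px (Sf ρ μ) t x) ^ 2))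
      ((continuous_const.mul hDc).intervalIntegrable (μ := volume) 0 T)
      (intervalIntegrable_const),
      intervalIntegral.integral_const_mul, intervalIntegral.integral_const]
    simp [mul_comm]
  have hH0 := sol.H0_le db
  have hHT := sol.HT_ge T
  rw [hH] at *
  rw [hrhs] at hmono
  set ID := ∫ t in (0:ℝ)..T, ∫ x in (0:ℝ)..1,
    Sf ρ μ t x ^ (α - 2) * (px (Sf ρ μ) t x) ^ 2 with hIDdef
  have hstep : (α / 2) * ID ≤ E + M * Real.log 2 + 1 + C3C α M K * T := by
    linarith
  have h2α : 0 < 2 / α := by positivity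
  have : ID = (2 / α) * ((α / 2) * ID) := by field_simp
  rw [this]
  unfold C4C
  exact mul_le_mul_of_nonneg_left hstep h2α.le

lemma final_est {M E B K : ℝ} (hT : 0 < T) (hα : 0 < α) (hα1 : α ≤ 1) (hM : 0 < M)
    (hE : 0 < E) (hK : 0 < K) (db : DataBounds V W ρ μ M E B K) :
    (∫ t in (0:ℝ)..T, ∫ x in (0:ℝ)..1, Sf ρ μ t x ^ (2 - α)) ≤ CC T α M E K := by
  have hmt : ∀ t ∈ Set.Icc (0:ℝ) T, (∫ x in (0:ℝ)..1, Sf ρ μ t x) ≤ M :=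
    by
      intro t ht
      have h0 : (∫ x in (0:ℝ)..1, Sf ρ μ 0 x) ≤ M := db.mass
      rw [sol.mass_const ht]
      exact h0
  have hβ0 := βc_nonneg hα hα1
  have hβ2 := βc_lt_two hα hα1
  have hDc := sol.D_cont
  have hPc : Continuous (fun t => ∫ x in (0:ℝ)..1, Sf ρ μ t x ^ (2 - α)) := by
    apply param_cont (f := fun t x => Sf ρ μ t x ^ (2 - α))
    exact sol.S_cd.continuous.rpow_const (fun p => Or.inl (sol.S_ne p.1 p.2))
  have hPb : ∀ t ∈ Set.Icc (0:ℝ) T,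
      (∫ x in (0:ℝ)..1, Sf ρ μ t x ^ (2 - α))
        ≤ M * (1 + M) ^ (βc α) * (3 + 2 * (∫ x in (0:ℝ)..1,
            Sf ρ μ t x ^ (α - 2) * (px (Sf ρ μ) t x) ^ 2)) := by
    intro t ht
    have h1 := sol.P_bound hα hα1 hM (hmt t ht)
    set Dv := ∫ x in (0:ℝ)..1, Sf ρ μ t x ^ (α - 2) * (px (Sf ρ μ) t x) ^ 2 with hDdef
    have hD0 : 0 ≤ Dv := intervalIntegral.integral_nonneg (by norm_num)
      (fun x _ => mul_nonneg (Real.rpow_nonneg (sol.S_pos t x).le _) (sq_nonneg _))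
    have hsD := Real.sqrt_nonneg Dv
    have h1sD : (0:ℝ) < 1 + Real.sqrt Dv := by linarith
    have e1 : ((1 + M) * (1 + Real.sqrt Dv)) ^ (βc α)
        = (1 + M) ^ (βc α) * (1 + Real.sqrt Dv) ^ (βc α) :=
      Real.mul_rpow (by linarith) h1sD.le
    have e2 : (1 + Real.sqrt Dv) ^ (βc α) = ((1 + Real.sqrt Dv) ^ (2:ℝ)) ^ (βc α / 2) := by
      rw [← Real.rpow_mul h1sD.le]
      congr 1
      ring
    have h6 : (1 + Real.sqrt Dv) ^ (2:ℝ) ≤ 2 * (1 + Dv) := by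
      rw [Real.rpow_two]
      nlinarith [Real.sq_sqrt hD0, sq_nonneg (Real.sqrt Dv - 1)]
    have h7 : ((1 + Real.sqrt Dv) ^ (2:ℝ)) ^ (βc α / 2) ≤ (2 * (1 + Dv)) ^ (βc α / 2) :=
      Real.rpow_le_rpow (Real.rpow_nonneg h1sD.le _) h6 (by linarith)
    have h8 : (2 * (1 + Dv)) ^ (βc α / 2) ≤ 1 + 2 * (1 + Dv) :=
      rpow_le_one_add (by linarith) (by linarith) (by linarith)
    have h9 : (1 + Real.sqrt Dv) ^ (βc α) ≤ 3 + 2 * Dv := by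
      rw [e2]
      linarith
    have hMβ : 0 ≤ M * (1 + M) ^ (βc α) := by positivity
    calc (∫ x in (0:ℝ)..1, Sf ρ μ t x ^ (2 - α))
        ≤ M * ((1 + M) * (1 + Real.sqrt Dv)) ^ (βc α) := h1
      _ = M * (1 + M) ^ (βc α) * (1 + Real.sqrt Dv) ^ (βc α) := by rw [e1]; ring
      _ ≤ M * (1 + M) ^ (βc α) * (3 + 2 * Dv) := by
          apply mul_le_mul_of_nonneg_left h9 hMβ
  have hmono : (∫ t in (0:ℝ)..T, ∫ x in (0:ℝ)..1, Sf ρ μ t x ^ (2 - α))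
      ≤ ∫ t in (0:ℝ)..T, (M * (1 + M) ^ (βc α) * (3 + 2 * (∫ x in (0:ℝ)..1,
          Sf ρ μ t x ^ (α - 2) * (px (Sf ρ μ) t x) ^ 2))) := by
    apply intervalIntegral.integral_mono_on hT.le
      (hPc.intervalIntegrable (μ := volume) 0 T)
      ((continuous_const.mul (continuous_const.add (continuous_const.mul hDc))).intervalIntegrable (μ := volume) 0 T)
    exact hPb
  have hrhs : (∫ t in (0:ℝ)..T, (M * (1 + M) ^ (βc α) * (3 + 2 * (∫ x in (0:ℝ)..1,
      Sf ρ μ t x ^ (α - 2) * (px (Sf ρ μ) t x) ^ 2))))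
      = M * (1 + M) ^ (βc α) * (3 * T + 2 * (∫ t in (0:ℝ)..T, ∫ x in (0:ℝ)..1,
          Sf ρ μ t x ^ (α - 2) * (px (Sf ρ μ) t x) ^ 2)) := by
    rw [intervalIntegral.integral_const_mul]
    rw [intervalIntegral.integral_add (g := fun t => 2 * ∫ x in (0:ℝ)..1, Sf ρ μ t x ^ (α - 2) * (px (Sf ρ μ) t x) ^ 2) intervalIntegrable_const
      ((continuous_const.mul hDc).intervalIntegrable (μ := volume) 0 T)]
    rw [intervalIntegral.integral_const_mul, intervalIntegral.integral_const]
    simp only [smul_eq_mul, sub_zero]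
    ring
  have hID := sol.intD_le hT hα hα1 hM hK db
  have hMβ : 0 ≤ M * (1 + M) ^ (βc α) := by positivity
  rw [hrhs] at hmono
  unfold CC
  calc (∫ t in (0:ℝ)..T, ∫ x in (0:ℝ)..1, Sf ρ μ t x ^ (2 - α))
      ≤ M * (1 + M) ^ (βc α) * (3 * T + 2 * (∫ t in (0:ℝ)..T, ∫ x in (0:ℝ)..1,
          Sf ρ μ t x ^ (α - 2) * (px (Sf ρ μ) t x) ^ 2)) := hmono
    _ ≤ M * (1 + M) ^ (βc α) * (3 * T + 2 * C4C T α M E K) := by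
        apply mul_le_mul_of_nonneg_left (by linarith) hMβ

end CrossDiffSol

end Sol2
/-- A priori estimate: `S ∈ L^(2-α)((0,T)×𝕋)`,
with a constant depending only on `T, α, M, E, K`. -/
theorem estimate_S_two_minus_alpha (T α M E K : ℝ) (hT : 0 < T) (hα : 0 < α) (hα1 : α ≤ 1)
    (hM : 0 < M) (hE : 0 < E) (hK : 0 < K) :
    ∃ C : ℝ, ∀ (B : ℝ) (V W : ℝ → ℝ) (ρ μ : ℝ → ℝ → ℝ), 0 < B →
      CrossDiffSol T α V W ρ μ → DataBounds V W ρ μ M E B K →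
      (∫ t in (0:ℝ)..T, ∫ x in (0:ℝ)..1, (ρ t x + μ t x) ^ (2 - α)) ≤ C := by
  refine ⟨CrossDiffSol.CC T α M E K, fun B V W ρ μ hB sol db => ?_⟩
  exact sol.final_est hT hα hα1 hM hE hK db
end
end

section
/- Every smooth positive solution of the cross-diffusion system on [0,T] with potentials V, W ∈ C³(𝕋) satisfies, pointwise on [0,T]×𝕋, the equation ∂_t r = ∂_x r · (α S^{α−2} ∂_x S + ((1−e^r)/(1+e^r)) 𝑤 + 𝑣) + 2𝑤 ∂_x log S + ∂_{xx}V − ∂_{xx}W, where r := log(ρ/μ), S := ρ + μ, 𝑣 := (∂_x V + ∂_x W)/2 and 𝑤 := (∂_x V − ∂_x W)/2. -/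
open MeasureTheory Real Set Filter

noncomputable section

/-- The ratio variable `r = log(ρ/μ)` satisfies the transport equation
`∂ₜr = ∂ₓr·(αS^(α-2)∂ₓS + g'(r)𝑤 + 𝑣) + 2𝑤∂ₓ log S + ∂ₓₓV - ∂ₓₓW`
pointwise on [0,T]×𝕋, where `𝑣 = (∂ₓV+∂ₓW)/2`, `𝑤 = (∂ₓV-∂ₓW)/2` and
`g'(r) = (1-e^r)/(1+e^r)`. -/
theorem equation_for_r (T α : ℝ) (hT : 0 < T) (hα : 0 < α) (hα1 : α ≤ 1)
    (V W : ℝ → ℝ) (ρ μ : ℝ → ℝ → ℝ) (hsol : CrossDiffSol T α V W ρ μ) :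
    ∀ t ∈ Set.Icc (0:ℝ) T, ∀ x : ℝ,
      pt (fun s y => Real.log (ρ s y / μ s y)) t x =
        px (fun s y => Real.log (ρ s y / μ s y)) t x *
          (α * (ρ t x + μ t x) ^ (α - 2) * px (fun s y => ρ s y + μ s y) t x
            + ((1 - Real.exp (Real.log (ρ t x / μ t x)))
                / (1 + Real.exp (Real.log (ρ t x / μ t x))))
              * ((deriv V x - deriv W x) / 2)
            + (deriv V x + deriv W x) / 2)
        + 2 * ((deriv V x - deriv W x) / 2)
            * px (fun s y => Real.log (ρ s y + μ s y)) t x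
        + deriv (deriv V) x - deriv (deriv W) x := by
  intro t ht x
  obtain ⟨hρ, hμ, -, -, hρpos, hμpos, hV, hW, -, -, eqρ, eqμ⟩ := hsol
  -- slices
  have hρxC : ContDiff ℝ (⊤ : ℕ∞) (fun y => ρ t y) := hρ.comp (contDiff_const.prodMk contDiff_id)
  have hμxC : ContDiff ℝ (⊤ : ℕ∞) (fun y => μ t y) := hμ.comp (contDiff_const.prodMk contDiff_id)
  have hρtC : ContDiff ℝ (⊤ : ℕ∞) (fun s => ρ s x) := hρ.comp (contDiff_id.prodMk contDiff_const)
  have hμtC : ContDiff ℝ (⊤ : ℕ∞) (fun s => μ s x) := hμ.comp (contDiff_id.prodMk contDiff_const)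
  have hapos : 0 < ρ t x := hρpos t x
  have hbpos : 0 < μ t x := hμpos t x
  have habpos : 0 < ρ t x + μ t x := by positivity
  have hρx : HasDerivAt (fun y => ρ t y) (px ρ t x) x :=
    (hρxC.differentiable (by simp) x).hasDerivAt
  have hμx : HasDerivAt (fun y => μ t y) (px μ t x) x :=
    (hμxC.differentiable (by simp) x).hasDerivAt
  have hρt : HasDerivAt (fun s => ρ s x) (pt ρ t x) t :=
    (hρtC.differentiable (by simp) t).hasDerivAt
  have hμt : HasDerivAt (fun s => μ s x) (pt μ t x) t :=
    (hμtC.differentiable (by simp) t).hasDerivAt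
  have hS : HasDerivAt (fun y => ρ t y + μ t y) (px ρ t x + px μ t x) x := hρx.add hμx
  -- derivatives of V, W
  have hV2 : ContDiff ℝ 2 (deriv V) := by
    have h3 : ContDiff ℝ (2 + 1) V := by norm_num; exact hV
    exact (contDiff_succ_iff_deriv.mp h3).2.2
  have hW2 : ContDiff ℝ 2 (deriv W) := by
    have h3 : ContDiff ℝ (2 + 1) W := by norm_num; exact hW
    exact (contDiff_succ_iff_deriv.mp h3).2.2
  have hdV : HasDerivAt (deriv V) (deriv (deriv V) x) x :=
    ((hV2.differentiable two_ne_zero) x).hasDerivAt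
  have hdW : HasDerivAt (deriv W) (deriv (deriv W) x) x :=
    ((hW2.differentiable two_ne_zero) x).hasDerivAt
  -- the drift B as a one-variable function
  set Bf : ℝ → ℝ := fun y =>
    α * (ρ t y + μ t y) ^ (α - 2) * deriv (fun y' => ρ t y' + μ t y') y with hBf
  have hSC : ContDiff ℝ (⊤ : ℕ∞) (fun y => ρ t y + μ t y) := hρxC.add hμxC
  have hdSC : ContDiff ℝ ((⊤ : ℕ∞) : WithTop ℕ∞) (deriv (fun y => ρ t y + μ t y)) :=
    (contDiff_infty_iff_deriv.mp (hSC.of_le (by simp))).2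
  have hBdiff : DifferentiableAt ℝ Bf x := by
    apply DifferentiableAt.mul
    · exact (differentiableAt_const α).mul
        (((hSC.differentiable (by simp)) x).rpow_const (Or.inl habpos.ne'))
    · exact (hdSC.differentiable (by simp)) x
  have hBd : HasDerivAt Bf (deriv Bf x) x := hBdiff.hasDerivAt
  have hBx : Bf x = α * (ρ t x + μ t x) ^ (α - 2) * (px ρ t x + px μ t x) := by
    rw [hBf]; simp only [hS.deriv]
  -- expand the right side of the rho equation
  have hpert : ∀ s, (fun y => ρ s y * (α * (ρ s y + μ s y) ^ (α - 2) *
      px (fun s' y' => ρ s' y' + μ s' y') s y)) =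
      fun y => ρ s y * (α * (ρ s y + μ s y) ^ (α - 2) *
        deriv (fun y' => ρ s y' + μ s y') y) := fun s => rfl
  have h5ρ : px (fun s y => ρ s y * (α * (ρ s y + μ s y) ^ (α - 2) *
      px (fun s' y' => ρ s' y' + μ s' y') s y)) t x =
      px ρ t x * Bf x + ρ t x * deriv Bf x := by
    show deriv (fun y => ρ t y * Bf y) x = _
    exact (hρx.mul hBd).deriv
  have h5μ : px (fun s y => μ s y * (α * (ρ s y + μ s y) ^ (α - 2) *
      px (fun s' y' => ρ s' y' + μ s' y') s y)) t x =
      px μ t x * Bf x + μ t x * deriv Bf x := by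
    show deriv (fun y => μ t y * Bf y) x = _
    exact (hμx.mul hBd).deriv
  have h6ρ : px (fun s y => ρ s y * deriv V y) t x =
      px ρ t x * deriv V x + ρ t x * deriv (deriv V) x := (hρx.mul hdV).deriv
  have h6μ : px (fun s y => μ s y * deriv W y) t x =
      px μ t x * deriv W x + μ t x * deriv (deriv W) x := (hμx.mul hdW).deriv
  -- time derivative of r
  have hrt : pt (fun s y => Real.log (ρ s y / μ s y)) t x =
      pt ρ t x / ρ t x - pt μ t x / μ t x := by
    have heq : (fun s => Real.log (ρ s x / μ s x)) =
        fun s => Real.log (ρ s x) - Real.log (μ s x) :=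
      funext fun s => Real.log_div (hρpos s x).ne' (hμpos s x).ne'
    show deriv (fun s => Real.log (ρ s x / μ s x)) t = _
    rw [heq]
    exact ((hρt.log hapos.ne').sub (hμt.log hbpos.ne')).deriv
  -- space derivative of r
  have hrx : px (fun s y => Real.log (ρ s y / μ s y)) t x =
      px ρ t x / ρ t x - px μ t x / μ t x := by
    have heq : (fun y => Real.log (ρ t y / μ t y)) =
        fun y => Real.log (ρ t y) - Real.log (μ t y) :=
      funext fun y => Real.log_div (hρpos t y).ne' (hμpos t y).ne'
    show deriv (fun y => Real.log (ρ t y / μ t y)) x = _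
    rw [heq]
    exact ((hρx.log hapos.ne').sub (hμx.log hbpos.ne')).deriv
  -- space derivative of log S
  have hlogS : px (fun s y => Real.log (ρ s y + μ s y)) t x =
      (px ρ t x + px μ t x) / (ρ t x + μ t x) := (hS.log habpos.ne').deriv
  have hSpx : px (fun s y => ρ s y + μ s y) t x = px ρ t x + px μ t x := hS.deriv
  -- substitute everything
  have hρeq := eqρ t ht x
  have hμeq := eqμ t ht x
  rw [h5ρ, h6ρ] at hρeq
  rw [h5μ, h6μ] at hμeq
  rw [hrt, hrx, hlogS, hSpx, hρeq, hμeq, hBx,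
    Real.exp_log (div_pos hapos hbpos)]
  have h1ab : (1:ℝ) + ρ t x / μ t x ≠ 0 := by positivity
  field_simp
  ring
end
end

section
/- Let T > 0, ε ∈ (0,1], C > 0. There exists a constant C', depending only on T, ε, C, such that for every nonnegative ρ ∈ C^∞([0,T]×𝕋) satisfying sup_{t∈[0,T]} ∫_𝕋 ρ(t,x) dx ≤ C and ∫₀^T (∫_𝕋 |∂_x ρ(t,x)| dx)^ε dt ≤ C, and for every h ∈ (0,1], one has ∫₀^T ∫_𝕋 |ρ(t,x+h) − ρ(t,x)| dx dt ≤ C' h^{ε/(1+ε)}. -/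
open MeasureTheory Real Set Filter

noncomputable section

/-- Spatial equicontinuity estimate: mass bound plus an `L^ε`-in-time spatial BV bound give
`∫₀ᵀ∫_𝕋 |ρ(t,x+h) - ρ(t,x)| dx dt ≤ C' h^(ε/(1+ε))` for all `h ∈ (0,1]`. -/
theorem spatial_equicontinuity (T ε C : ℝ) (hT : 0 < T) (hε : 0 < ε) (hε1 : ε ≤ 1)
    (hC : 0 < C) :
    ∃ C' : ℝ, ∀ ρ : ℝ → ℝ → ℝ,
      ContDiff ℝ (⊤ : ℕ∞) (Function.uncurry ρ) →
      (∀ t, Function.Periodic (ρ t) 1) →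
      (∀ t x, 0 ≤ ρ t x) →
      (∀ t ∈ Set.Icc (0:ℝ) T, (∫ x in (0:ℝ)..1, ρ t x) ≤ C) →
      (∫ t in (0:ℝ)..T, (∫ x in (0:ℝ)..1, |px ρ t x|) ^ ε) ≤ C →
      ∀ h ∈ Set.Ioc (0:ℝ) 1,
        (∫ t in (0:ℝ)..T, ∫ x in (0:ℝ)..1, |ρ t (x + h) - ρ t x|) ≤
          C' * h ^ (ε / (1 + ε)) := by
  refine ⟨T + 2 * C ^ 2, ?_⟩
  intro ρ hρ hper hpos hmass hbv h hh
  obtain ⟨hh0, hh1⟩ := hh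
  have h1ε : (0:ℝ) < 1 + ε := by linarith
  -- smoothness facts
  have hdiff : Differentiable ℝ (Function.uncurry ρ) := hρ.differentiable (by simp)
  have hderiv : ∀ t x, HasDerivAt (fun y => ρ t y)
      (fderiv ℝ (Function.uncurry ρ) (t, x) (0, 1)) x := by
    intro t x
    exact (hdiff (t, x)).hasFDerivAt.comp_hasDerivAt x
      ((hasDerivAt_const x t).prodMk (hasDerivAt_id x))
  have heq : ∀ t x, px ρ t x = fderiv ℝ (Function.uncurry ρ) (t, x) (0, 1) :=
    fun t x => (hderiv t x).deriv
  have pxc : Continuous fun p : ℝ × ℝ => px ρ p.1 p.2 :=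
    ((hρ.continuous_fderiv (by simp)).clm_apply continuous_const).congr
      fun p => (heq p.1 p.2).symm
  have hρc : Continuous (Function.uncurry ρ) := hρ.continuous
  have hρtc : ∀ t, Continuous (ρ t) := fun t =>
    hρc.comp (continuous_const.prodMk continuous_id)
  have pxtc : ∀ t, Continuous fun x => px ρ t x := fun t =>
    pxc.comp (continuous_const.prodMk continuous_id)
  -- main functions
  set f : ℝ → ℝ := fun t => ∫ x in (0:ℝ)..1, |px ρ t x| with hf
  set g : ℝ → ℝ := fun t => ∫ x in (0:ℝ)..1, |ρ t (x + h) - ρ t x| with hg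
  have contf : Continuous f := by
    apply intervalIntegral.continuous_parametric_intervalIntegral_of_continuous'
      (f := fun t x => |px ρ t x|)
    exact pxc.abs
  have contg : Continuous g := by
    apply intervalIntegral.continuous_parametric_intervalIntegral_of_continuous'
      (f := fun t x => |ρ t (x + h) - ρ t x|)
    have c1 : Continuous fun p : ℝ × ℝ => ρ p.1 (p.2 + h) :=
      hρc.comp (continuous_fst.prodMk (continuous_snd.add continuous_const))
    exact (c1.sub hρc).abs
  have fnn : ∀ t, 0 ≤ f t := fun t =>
    intervalIntegral.integral_nonneg zero_le_one fun x _ => abs_nonneg _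
  -- Bound 1 : g t ≤ 2C on [0,T]
  have bound1 : ∀ t ∈ Icc (0:ℝ) T, g t ≤ 2 * C := by
    intro t ht
    have int1 : IntervalIntegrable (fun x => |ρ t (x + h) - ρ t x|) volume 0 1 :=
      (((hρtc t).comp (continuous_id.add continuous_const)).sub (hρtc t)).abs.intervalIntegrable _ _
    have int2 : IntervalIntegrable (fun x => ρ t (x + h) + ρ t x) volume 0 1 :=
      (((hρtc t).comp (continuous_id.add continuous_const)).add (hρtc t)).intervalIntegrable _ _
    have step : g t ≤ ∫ x in (0:ℝ)..1, (ρ t (x + h) + ρ t x) := by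
      apply intervalIntegral.integral_mono_on zero_le_one int1 int2
      intro x _
      calc |ρ t (x + h) - ρ t x| ≤ |ρ t (x + h)| + |ρ t x| := abs_sub _ _
        _ = ρ t (x + h) + ρ t x := by
            rw [abs_of_nonneg (hpos t _), abs_of_nonneg (hpos t _)]
    have split : (∫ x in (0:ℝ)..1, (ρ t (x + h) + ρ t x))
        = (∫ x in (0:ℝ)..1, ρ t (x + h)) + ∫ x in (0:ℝ)..1, ρ t x := by
      exact intervalIntegral.integral_add
        (((hρtc t).comp (continuous_id.add continuous_const)).intervalIntegrable _ _)
        ((hρtc t).intervalIntegrable _ _)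
    have shift : (∫ x in (0:ℝ)..1, ρ t (x + h)) = ∫ x in (0:ℝ)..1, ρ t x := by
      rw [intervalIntegral.integral_comp_add_right (fun x => ρ t x) h]
      have := (hper t).intervalIntegral_add_eq h 0
      simpa [add_comm] using this
    have := hmass t ht
    calc g t ≤ _ := step
      _ = (∫ x in (0:ℝ)..1, ρ t (x + h)) + ∫ x in (0:ℝ)..1, ρ t x := split
      _ ≤ C + C := by rw [shift]; linarith
      _ = 2 * C := by ring
  -- Bound 2 : g t ≤ h * f t
  have bound2 : ∀ t, g t ≤ h * f t := by
    intro t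
    set w : ℝ → ℝ := fun y => |px ρ t y| with hwdef
    have wc : Continuous w := (pxtc t).abs
    have wper : Function.Periodic w 1 := by
      intro y
      have e1 : deriv (fun z => ρ t (z + 1)) y = deriv (ρ t) (y + 1) :=
        deriv_comp_add_const (ρ t) 1 y
      have e2 : (fun z => ρ t (z + 1)) = ρ t := funext fun z => hper t z
      have : px ρ t (y + 1) = px ρ t y := by
        show deriv (fun z => ρ t z) (y + 1) = deriv (fun z => ρ t z) y
        rw [← e1, e2]
      simp [hwdef, this]
    have wint : ∀ s : ℝ, (∫ x in s..(s+1), w x) = f t := by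
      intro s
      rw [wper.intervalIntegral_add_eq s 0]
      simp [hf, hwdef]
    -- pointwise FTC bound
    have step1 : ∀ x, |ρ t (x + h) - ρ t x| ≤ ∫ s in (0:ℝ)..h, w (x + s) := by
      intro x
      have ftc : (∫ y in x..(x+h), px ρ t y) = ρ t (x + h) - ρ t x := by
        apply intervalIntegral.integral_eq_sub_of_hasDerivAt
        · intro y _
          exact hderiv t y |>.congr_deriv (heq t y).symm |>.congr_deriv rfl
        · exact (pxtc t).intervalIntegrable _ _
      have habs : |ρ t (x + h) - ρ t x| ≤ ∫ y in x..(x+h), w y := by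
        rw [← ftc]
        exact intervalIntegral.abs_integral_le_integral_abs (by linarith)
      have hcv : (∫ s in (0:ℝ)..h, w (x + s)) = ∫ y in x..(x+h), w y := by
        rw [intervalIntegral.integral_comp_add_left w x]
        norm_num
      rw [hcv]; exact habs
    have int1 : IntervalIntegrable (fun x => |ρ t (x + h) - ρ t x|) volume 0 1 :=
      (((hρtc t).comp (continuous_id.add continuous_const)).sub (hρtc t)).abs.intervalIntegrable _ _
    have cont2 : Continuous fun x : ℝ => ∫ s in (0:ℝ)..h, w (x + s) := by
      apply intervalIntegral.continuous_parametric_intervalIntegral_of_continuous'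
        (f := fun x s => w (x + s))
      exact wc.comp (continuous_fst.add continuous_snd)
    have step2 : g t ≤ ∫ x in (0:ℝ)..1, ∫ s in (0:ℝ)..h, w (x + s) := by
      apply intervalIntegral.integral_mono_on zero_le_one int1
        (cont2.intervalIntegrable _ _)
      intro x _; exact step1 x
    -- Fubini
    have swap : (∫ x in (0:ℝ)..1, ∫ s in (0:ℝ)..h, w (x + s))
        = ∫ s in (0:ℝ)..h, ∫ x in (0:ℝ)..1, w (x + s) := by
      rw [intervalIntegral.integral_of_le zero_le_one,
        intervalIntegral.integral_of_le hh0.le]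
      simp_rw [intervalIntegral.integral_of_le hh0.le,
        intervalIntegral.integral_of_le zero_le_one]
      apply MeasureTheory.integral_integral_swap
      rw [Measure.prod_restrict]
      apply (IntegrableOn.mono_set ?_ (Set.prod_mono Ioc_subset_Icc_self Ioc_subset_Icc_self))
      exact (wc.comp (continuous_fst.add continuous_snd)).locallyIntegrable.integrableOn_isCompact
        (isCompact_Icc.prod isCompact_Icc)
    have inner : ∀ s : ℝ, (∫ x in (0:ℝ)..1, w (x + s)) = f t := by
      intro s
      rw [intervalIntegral.integral_comp_add_right w s]
      simpa [add_comm] using wint s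
    calc g t ≤ _ := step2
      _ = ∫ s in (0:ℝ)..h, ∫ x in (0:ℝ)..1, w (x + s) := swap
      _ = ∫ s in (0:ℝ)..h, f t := by simp_rw [inner]
      _ = h * f t := by simp [mul_comm]
  -- pointwise Chebyshev-style interpolation
  set M : ℝ := h ^ (-(1 + ε)⁻¹ : ℝ) with hM
  have hM0 : 0 < M := rpow_pos_of_pos hh0 _
  have hMε : 0 < M ^ ε := rpow_pos_of_pos hM0 _
  have ptw : ∀ t ∈ Icc (0:ℝ) T, g t ≤ h * M + (2 * C * (M ^ ε)⁻¹) * f t ^ ε := by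
    intro t ht
    by_cases hft : f t ≤ M
    · have h1 : g t ≤ h * M := (bound2 t).trans (by nlinarith)
      have h2 : 0 ≤ (2 * C * (M ^ ε)⁻¹) * f t ^ ε := by
        have := rpow_nonneg (fnn t) ε
        positivity
      linarith
    · push_neg at hft
      have h1 : M ^ ε ≤ f t ^ ε := rpow_le_rpow hM0.le hft.le hε.le
      have h2 : (1:ℝ) ≤ (M ^ ε)⁻¹ * f t ^ ε := by
        calc (1:ℝ) = (M ^ ε)⁻¹ * M ^ ε := by field_simp
          _ ≤ (M ^ ε)⁻¹ * f t ^ ε := by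
              apply mul_le_mul_of_nonneg_left h1 (by positivity)
      have h3 : g t ≤ 2 * C := bound1 t ht
      have h4 : 2 * C ≤ 2 * C * ((M ^ ε)⁻¹ * f t ^ ε) := by nlinarith
      have h5 : 0 ≤ h * M := by positivity
      calc g t ≤ 2 * C := h3
        _ ≤ 2 * C * ((M ^ ε)⁻¹ * f t ^ ε) := h4
        _ ≤ h * M + (2 * C * (M ^ ε)⁻¹) * f t ^ ε := by rw [← mul_assoc]; linarith
  -- integrate
  have contfe : Continuous fun t => f t ^ ε :=
    contf.rpow_const fun t => Or.inr hε.le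
  have bint : IntervalIntegrable
      (fun t => h * M + (2 * C * (M ^ ε)⁻¹) * f t ^ ε) volume 0 T :=
    ((continuous_const.add (continuous_const.mul contfe))).intervalIntegrable _ _
  have main : (∫ t in (0:ℝ)..T, g t)
      ≤ ∫ t in (0:ℝ)..T, (h * M + (2 * C * (M ^ ε)⁻¹) * f t ^ ε) :=
    intervalIntegral.integral_mono_on hT.le (contg.intervalIntegrable _ _) bint ptw
  have expand : (∫ t in (0:ℝ)..T, (h * M + (2 * C * (M ^ ε)⁻¹) * f t ^ ε))
      = T * (h * M) + (2 * C * (M ^ ε)⁻¹) * ∫ t in (0:ℝ)..T, f t ^ ε := by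
    rw [intervalIntegral.integral_add (f := fun _ => h * M) (g := fun t => (2 * C * (M ^ ε)⁻¹) * f t ^ ε) (intervalIntegrable_const)
      ((continuous_const.mul contfe).intervalIntegrable _ _),
      intervalIntegral.integral_const_mul, intervalIntegral.integral_const]
    simp [smul_eq_mul]; ring
  have hbv' : (∫ t in (0:ℝ)..T, f t ^ ε) ≤ C := hbv
  have final : T * (h * M) + (2 * C * (M ^ ε)⁻¹) * ∫ t in (0:ℝ)..T, f t ^ ε
      ≤ T * (h * M) + (2 * C * (M ^ ε)⁻¹) * C := by
    have : 0 < 2 * C * (M ^ ε)⁻¹ := by positivity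
    nlinarith
  -- algebra with rpow
  have hhM : h * M = h ^ (ε / (1 + ε)) := by
    rw [hM]
    nth_rewrite 1 [← Real.rpow_one h]
    rw [← Real.rpow_add hh0]
    congr 1
    field_simp
    ring
  have hMεinv : (M ^ ε)⁻¹ = h ^ (ε / (1 + ε)) := by
    rw [hM, ← Real.rpow_mul hh0.le, ← Real.rpow_neg hh0.le]
    congr 1
    field_simp
  calc (∫ t in (0:ℝ)..T, ∫ x in (0:ℝ)..1, |ρ t (x + h) - ρ t x|)
      = ∫ t in (0:ℝ)..T, g t := rfl
    _ ≤ _ := main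
    _ = T * (h * M) + (2 * C * (M ^ ε)⁻¹) * ∫ t in (0:ℝ)..T, f t ^ ε := expand
    _ ≤ T * (h * M) + (2 * C * (M ^ ε)⁻¹) * C := final
    _ = (T + 2 * C ^ 2) * h ^ (ε / (1 + ε)) := by rw [hhM, hMεinv]; ring
end
end

section
/- Let 0 < α < 1 and T, M, K₀ > 0. There exists a constant C, depending only on α, T, M, K₀, such that for every strictly positive S ∈ C^∞([0,T]×𝕋) satisfying sup_{t∈[0,T]} ∫_𝕋 S(t,x) dx ≤ M and ∫₀^T ∫_𝕋 |∂_x(S(t,x)^{α/2})|² dx dt ≤ K₀, one has ∫₀^T ∫_𝕋 S(t,x)^{2−α} dx dt ≤ C. -/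
open MeasureTheory Real Set Filter

noncomputable section


lemma my_finite : IsFiniteMeasure ((volume : Measure ℝ).restrict (Ioc (0:ℝ) 1)) := by
  constructor
  rw [Measure.restrict_apply_univ]
  simp

lemma my_memLp (f : ℝ → ℝ) (hf : Continuous f) (p : ENNReal) :
    MemLp f p ((volume : Measure ℝ).restrict (Ioc (0:ℝ) 1)) := by
  haveI := my_finite
  obtain ⟨C, hC⟩ := isCompact_Icc.exists_bound_of_continuousOn (f := f) hf.continuousOn
  exact MemLp.of_bound hf.aestronglyMeasurable C <|
    (ae_restrict_iff' measurableSet_Ioc).2 <| Eventually.of_forall fun x hx =>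
      hC x ⟨hx.1.le, hx.2⟩

lemma my_cs (u v : ℝ → ℝ) (hu : Continuous u) (hv : Continuous v)
    (hu0 : ∀ x, 0 ≤ u x) (hv0 : ∀ x, 0 ≤ v x) :
    (∫ x in (0:ℝ)..1, u x * v x) ≤
      Real.sqrt (∫ x in (0:ℝ)..1, u x ^ 2) * Real.sqrt (∫ x in (0:ℝ)..1, v x ^ 2) := by
  have h22 : (2:ℝ).HolderConjugate 2 := Real.holderConjugate_iff.mpr ⟨by norm_num, by norm_num⟩
  have := integral_mul_le_Lp_mul_Lq_of_nonneg h22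
    (μ := (volume : Measure ℝ).restrict (Ioc (0:ℝ) 1)) (f := u) (g := v)
    (Eventually.of_forall hu0) (Eventually.of_forall hv0)
    (my_memLp u hu _) (my_memLp v hv _)
  rw [intervalIntegral.integral_of_le zero_le_one, intervalIntegral.integral_of_le zero_le_one,
    intervalIntegral.integral_of_le zero_le_one]
  calc ∫ x in Ioc (0:ℝ) 1, u x * v x ≤
      (∫ x in Ioc (0:ℝ) 1, u x ^ (2:ℝ)) ^ (1/(2:ℝ)) * (∫ x in Ioc (0:ℝ) 1, v x ^ (2:ℝ)) ^ (1/(2:ℝ)) := this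
    _ = Real.sqrt (∫ x in Ioc (0:ℝ) 1, u x ^ 2) * Real.sqrt (∫ x in Ioc (0:ℝ) 1, v x ^ 2) := by
        rw [← Real.sqrt_eq_rpow, ← Real.sqrt_eq_rpow]
        congr 2 <;> · apply integral_congr_ae; filter_upwards with x
                      rw [show ((2:ℝ)) = ((2:ℕ):ℝ) by norm_num, Real.rpow_natCast]

lemma my_jensen (f : ℝ → ℝ) (hf : Continuous f) (hf0 : ∀ x, 0 ≤ f x) {β : ℝ}
    (hβ : 0 < β) (hβ1 : β < 1) :
    (∫ x in (0:ℝ)..1, f x ^ β) ≤ (∫ x in (0:ℝ)..1, f x) ^ β := by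
  have hconj : (1/β).HolderConjugate (1/(1-β)) := by
    rw [Real.holderConjugate_iff]; constructor
    · rw [lt_div_iff₀ hβ]; linarith
    · rw [one_div, one_div, inv_inv, inv_inv]; ring
  have hfβ : Continuous fun x => f x ^ β := hf.rpow_const fun x => Or.inr hβ.le
  have hfβ0 : ∀ x, 0 ≤ f x ^ β := fun x => Real.rpow_nonneg (hf0 x) β
  have h := integral_mul_le_Lp_mul_Lq_of_nonneg hconj
    (μ := (volume : Measure ℝ).restrict (Ioc (0:ℝ) 1)) (f := fun x => f x ^ β)
    (g := fun _ => (1:ℝ))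
    (Eventually.of_forall hfβ0) (Eventually.of_forall fun _ => zero_le_one)
    (my_memLp _ hfβ _) (my_memLp _ continuous_const _)
  simp only [mul_one] at h
  have h1 : ∀ x : ℝ, (f x ^ β) ^ (1/β) = f x := fun x => by
    rw [← Real.rpow_mul (hf0 x), mul_one_div, div_self hβ.ne', Real.rpow_one]
  have h2 : ((1:ℝ)) ^ (1/(1-β)) = 1 := Real.one_rpow _
  simp only [h1, h2] at h
  have h3 : (∫ _x in Ioc (0:ℝ) 1, (1:ℝ)) = 1 := by simp
  rw [h3, Real.one_rpow, mul_one, one_div_one_div] at h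
  rw [intervalIntegral.integral_of_le zero_le_one, intervalIntegral.integral_of_le zero_le_one]
  exact h

lemma my_ftc (g g' : ℝ → ℝ) (hg : ∀ x, HasDerivAt g (g' x) x) (hg' : Continuous g')
    {x₀ x : ℝ} (h₀ : x₀ ∈ Icc (0:ℝ) 1) (hx : x ∈ Icc (0:ℝ) 1) :
    g x ≤ g x₀ + ∫ u in (0:ℝ)..1, |g' u| := by
  have hInt : ∀ a b : ℝ, IntervalIntegrable g' volume a b := fun a b =>
    hg'.intervalIntegrable a b
  have habs : Continuous fun u => |g' u| := hg'.abs
  have habs0 : (0:ℝ → ℝ) ≤ᵐ[volume.restrict (Ioc (0:ℝ) 1)] fun u => |g' u| :=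
    Eventually.of_forall fun u => abs_nonneg _
  rcases le_total x₀ x with h | h
  · have heq : ∫ u in x₀..x, g' u = g x - g x₀ :=
      intervalIntegral.integral_eq_sub_of_hasDerivAt (fun u _ => hg u) (hInt x₀ x)
    have h1 : ∫ u in x₀..x, g' u ≤ ∫ u in x₀..x, |g' u| :=
      intervalIntegral.integral_mono h (hInt _ _) (habs.intervalIntegrable _ _)
        (fun u => le_abs_self _)
    have h2 : ∫ u in x₀..x, |g' u| ≤ ∫ u in (0:ℝ)..1, |g' u| :=
      intervalIntegral.integral_mono_interval h₀.1 h hx.2 habs0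
        (habs.intervalIntegrable _ _)
    linarith
  · have heq : ∫ u in x..x₀, g' u = g x₀ - g x :=
      intervalIntegral.integral_eq_sub_of_hasDerivAt (fun u _ => hg u) (hInt x x₀)
    have h1 : |∫ u in x..x₀, g' u| ≤ ∫ u in x..x₀, |g' u| :=
      intervalIntegral.abs_integral_le_integral_abs h
    have h2 : ∫ u in x..x₀, |g' u| ≤ ∫ u in (0:ℝ)..1, |g' u| :=
      intervalIntegral.integral_mono_interval hx.1 h h₀.2 habs0
        (habs.intervalIntegrable _ _)
    have h3 : -(∫ u in x..x₀, g' u) ≤ |∫ u in x..x₀, g' u| := neg_le_abs _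
    linarith

lemma my_key (α M : ℝ) (hα : 0 < α) (hα1 : α < 1) (hM : 0 < M) :
    ∃ a b : ℝ, 0 ≤ a ∧ 0 ≤ b ∧ ∀ f : ℝ → ℝ, ContDiff ℝ (⊤ : ℕ∞) f → (∀ x, 0 < f x) →
      (∫ x in (0:ℝ)..1, f x) ≤ M →
      (∫ x in (0:ℝ)..1, f x ^ (2-α)) ≤
        a + b * ∫ x in (0:ℝ)..1, (deriv (fun y => f y ^ (α/2)) x)^2 := by
  rcases le_or_gt (1/2 : ℝ) α with hhalf | hhalf
  · -- easy case α ≥ 1/2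
    refine ⟨M*(1+2*M^α), 2*M, by positivity, by positivity, ?_⟩
    intro f hf hpos hintM
    have hcf : Continuous f := hf.continuous
    have hcf' : Continuous (deriv f) := hf.continuous_deriv (by simp)
    set h' : ℝ → ℝ := fun x => deriv f x * (α/2) * f x ^ (α/2-1) with hh'def
    have hh : ∀ x, HasDerivAt (fun y => f y ^ (α/2)) (h' x) x := fun x =>
      ((hf.differentiable (by simp) x).hasDerivAt).rpow_const (Or.inl (hpos x).ne')
    have hh'cont : Continuous h' :=
      (hcf'.mul continuous_const).mul (hcf.rpow_const fun x => Or.inl (hpos x).ne')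
    set D : ℝ := ∫ x in (0:ℝ)..1, h' x ^ 2 with hDdef
    have hDeq : (∫ x in (0:ℝ)..1, (deriv (fun y => f y ^ (α/2)) x)^2) = D := by
      apply intervalIntegral.integral_congr
      intro x _
      show (deriv (fun y => f y ^ (α/2)) x)^2 = h' x ^ 2
      rw [(hh x).deriv]
    have hD0 : 0 ≤ D := intervalIntegral.integral_nonneg zero_le_one fun u _ => sq_nonneg _
    obtain ⟨x₀, hx₀, hmin⟩ := isCompact_Icc.exists_isMinOn (nonempty_Icc.2 zero_le_one)
      hcf.continuousOn
    have hfx₀ : f x₀ ≤ M := by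
      have h1 : f x₀ = ∫ _x in (0:ℝ)..1, f x₀ := by simp
      have h2 : (∫ _x in (0:ℝ)..1, f x₀) ≤ ∫ x in (0:ℝ)..1, f x :=
        intervalIntegral.integral_mono_on zero_le_one intervalIntegrable_const
          (hcf.intervalIntegrable _ _) fun u hu => hmin hu
      linarith
    have hA : (∫ x in (0:ℝ)..1, |h' x|) ≤ Real.sqrt D := by
      have := my_cs (fun x => |h' x|) (fun _ => 1) hh'cont.abs continuous_const
        (fun x => abs_nonneg _) (fun _ => zero_le_one)
      simpa [sq_abs] using this
    have hbound : ∀ x ∈ Icc (0:ℝ) 1, f x ^ (α/2) ≤ M^(α/2) + Real.sqrt D := by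
      intro x hxm
      have h1 := my_ftc (fun y => f y ^ (α/2)) h' hh hh'cont hx₀ hxm
      have h2 : f x₀ ^ (α/2) ≤ M ^ (α/2) :=
        Real.rpow_le_rpow (hpos x₀).le hfx₀ (by positivity)
      linarith
    have hpoint : ∀ x ∈ Icc (0:ℝ) 1, f x ^ (2-α) ≤ f x * (1 + 2*M^α + 2*D) := by
      intro x hxm
      have hsD : (0:ℝ) ≤ Real.sqrt D := Real.sqrt_nonneg D
      have hMα2 : (0:ℝ) < M^(α/2) := by positivity
      have hβpos : (0:ℝ) < M^(α/2) + Real.sqrt D := by positivity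
      have hq0 : (0:ℝ) ≤ (1-α)/(α/2) := div_nonneg (by linarith) (by positivity)
      have h1 : f x ^ ((1:ℝ)-α) ≤ 1 + (M^(α/2) + Real.sqrt D)^2 := by
        have e1 : f x ^ ((1:ℝ)-α) = (f x ^ (α/2)) ^ ((1-α)/(α/2)) := by
          rw [← Real.rpow_mul (hpos x).le]
          congr 1
          field_simp
        have e2 : (f x ^ (α/2)) ^ ((1-α)/(α/2)) ≤ (M^(α/2) + Real.sqrt D) ^ ((1-α)/(α/2)) :=
          Real.rpow_le_rpow (Real.rpow_nonneg (hpos x).le _) (hbound x hxm) hq0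
        have hq2 : (1-α)/(α/2) ≤ 2 := by
          rw [div_le_iff₀ (by positivity)]; linarith
        rcases le_total (M^(α/2) + Real.sqrt D) 1 with hβ1 | hβ1
        · have h3 : (M^(α/2) + Real.sqrt D) ^ ((1-α)/(α/2)) ≤ 1 :=
            Real.rpow_le_one hβpos.le hβ1 hq0
          rw [e1]
          nlinarith [sq_nonneg (M^(α/2) + Real.sqrt D)]
        · have h3 : (M^(α/2) + Real.sqrt D) ^ ((1-α)/(α/2)) ≤ (M^(α/2) + Real.sqrt D) ^ (2:ℝ) :=
            Real.rpow_le_rpow_of_exponent_le hβ1 hq2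
          have h4 : (M^(α/2) + Real.sqrt D) ^ (2:ℝ) = (M^(α/2) + Real.sqrt D)^2 := by
            rw [show (2:ℝ)=((2:ℕ):ℝ) by norm_num, Real.rpow_natCast]
          rw [h4] at h3
          rw [e1]
          linarith
      have hβsq : (M^(α/2) + Real.sqrt D)^2 ≤ 2*M^α + 2*D := by
        have hs : Real.sqrt D ^ 2 = D := Real.sq_sqrt hD0
        have hM2 : (M^(α/2))^2 = M^α := by
          rw [← Real.rpow_natCast (M^(α/2)) 2, ← Real.rpow_mul hM.le]
          norm_num
        nlinarith [sq_nonneg (M^(α/2) - Real.sqrt D)]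
      have e5 : f x ^ (2-α) = f x * f x ^ ((1:ℝ)-α) := by
        rw [show (2-α) = 1 + (1-α) by ring, Real.rpow_add (hpos x), Real.rpow_one]
      rw [e5]
      have := mul_le_mul_of_nonneg_left (show f x ^ ((1:ℝ)-α) ≤ 1 + 2*M^α + 2*D by linarith)
        (hpos x).le
      linarith
    rw [hDeq]
    have hcont2α : Continuous fun x => f x ^ (2-α) :=
      hcf.rpow_const fun x => Or.inl (hpos x).ne'
    calc (∫ x in (0:ℝ)..1, f x ^ (2-α))
        ≤ ∫ x in (0:ℝ)..1, f x * (1 + 2*M^α + 2*D) :=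
          intervalIntegral.integral_mono_on zero_le_one (hcont2α.intervalIntegrable _ _)
            ((hcf.mul continuous_const).intervalIntegrable _ _) hpoint
      _ = (∫ x in (0:ℝ)..1, f x) * (1 + 2*M^α + 2*D) := by
          rw [← intervalIntegral.integral_mul_const]
      _ ≤ M * (1 + 2*M^α + 2*D) := by
          have : (0:ℝ) ≤ 1 + 2*M^α + 2*D := by positivity
          exact mul_le_mul_of_nonneg_right hintM this
      _ = M*(1+2*M^α) + 2*M * D := by ring
  · -- hard case α < 1/2
    refine ⟨2*M*M^(1-α), 4*M*(2*(1-α)/α)^2*M^(1-2*α), by positivity,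
      mul_nonneg (mul_nonneg (by positivity) (sq_nonneg _)) (Real.rpow_nonneg hM.le _), ?_⟩
    intro f hf hpos hintM
    set c₀ : ℝ := 2*(1-α)/α with hc₀def
    have hc₀pos : 0 < c₀ := by rw [hc₀def]; apply div_pos <;> linarith
    have hcf : Continuous f := hf.continuous
    have hcf' : Continuous (deriv f) := hf.continuous_deriv (by simp)
    have hintf0 : (0:ℝ) ≤ ∫ x in (0:ℝ)..1, f x :=
      intervalIntegral.integral_nonneg zero_le_one fun u _ => (hpos u).le
    set h' : ℝ → ℝ := fun x => deriv f x * (α/2) * f x ^ (α/2-1) with hh'def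
    have hh : ∀ x, HasDerivAt (fun y => f y ^ (α/2)) (h' x) x := fun x =>
      ((hf.differentiable (by simp) x).hasDerivAt).rpow_const (Or.inl (hpos x).ne')
    have hh'cont : Continuous h' :=
      (hcf'.mul continuous_const).mul (hcf.rpow_const fun x => Or.inl (hpos x).ne')
    set D : ℝ := ∫ x in (0:ℝ)..1, h' x ^ 2 with hDdef
    have hDeq : (∫ x in (0:ℝ)..1, (deriv (fun y => f y ^ (α/2)) x)^2) = D := by
      apply intervalIntegral.integral_congr
      intro x _
      show (deriv (fun y => f y ^ (α/2)) x)^2 = h' x ^ 2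
      rw [(hh x).deriv]
    have hD0 : 0 ≤ D := intervalIntegral.integral_nonneg zero_le_one fun u _ => sq_nonneg _
    obtain ⟨x₀, hx₀, hmin⟩ := isCompact_Icc.exists_isMinOn (nonempty_Icc.2 zero_le_one)
      hcf.continuousOn
    have hfx₀ : f x₀ ≤ M := by
      have h1 : f x₀ = ∫ _x in (0:ℝ)..1, f x₀ := by simp
      have h2 : (∫ _x in (0:ℝ)..1, f x₀) ≤ ∫ x in (0:ℝ)..1, f x :=
        intervalIntegral.integral_mono_on zero_le_one intervalIntegrable_const
          (hcf.intervalIntegrable _ _) fun u hu => hmin hu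
      linarith
    -- the function g = f^(1-α)
    set g' : ℝ → ℝ := fun x => deriv f x * (1-α) * f x ^ ((1:ℝ)-α-1) with hg'def
    have hg : ∀ x, HasDerivAt (fun y => f y ^ ((1:ℝ)-α)) (g' x) x := fun x =>
      ((hf.differentiable (by simp) x).hasDerivAt).rpow_const (Or.inl (hpos x).ne')
    have hg'cont : Continuous g' :=
      (hcf'.mul continuous_const).mul (hcf.rpow_const fun x => Or.inl (hpos x).ne')
    set A : ℝ := ∫ x in (0:ℝ)..1, |g' x| with hAdef
    have hA0 : 0 ≤ A := intervalIntegral.integral_nonneg zero_le_one fun u _ => abs_nonneg _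
    set B : ℝ := M^(1-α) + A with hBdef
    have hB0 : 0 < B := by
      have : (0:ℝ) < M^(1-α) := by positivity
      rw [hBdef]; linarith
    have hgbound : ∀ x ∈ Icc (0:ℝ) 1, f x ^ ((1:ℝ)-α) ≤ B := by
      intro x hxm
      have h1 := my_ftc (fun y => f y ^ ((1:ℝ)-α)) g' hg hg'cont hx₀ hxm
      have h2 : f x₀ ^ ((1:ℝ)-α) ≤ M ^ (1-α) :=
        Real.rpow_le_rpow (hpos x₀).le hfx₀ (by linarith)
      rw [hBdef, hAdef]
      linarith
    -- the weight u
    set u : ℝ → ℝ := fun x => f x ^ ((1-α)/2) * f x ^ ((1-2*α)/2) with hudef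
    have hucont : Continuous u :=
      (hcf.rpow_const fun x => Or.inl (hpos x).ne').mul
        (hcf.rpow_const fun x => Or.inl (hpos x).ne')
    have hu0 : ∀ x, 0 ≤ u x := fun x =>
      mul_nonneg (Real.rpow_nonneg (hpos x).le _) (Real.rpow_nonneg (hpos x).le _)
    have hsq : ∀ (c : ℝ) (x : ℝ), (f x ^ (c/2))^2 = f x ^ c := fun c x => by
      rw [← Real.rpow_natCast (f x ^ (c/2)) 2, ← Real.rpow_mul (hpos x).le]
      norm_num
    have hu2 : ∀ x, u x ^ 2 = f x ^ ((1:ℝ)-α) * f x ^ (1-2*α) := by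
      intro x
      rw [hudef]
      simp only
      rw [mul_pow, hsq (1-α) x, hsq (1-2*α) x]
    have hid : ∀ x, |g' x| = c₀ * (u x * |h' x|) := by
      intro x
      have e : f x ^ ((1-α)/2) * f x ^ ((1-2*α)/2) * f x ^ (α/2-1) = f x ^ ((1:ℝ)-α-1) := by
        rw [← Real.rpow_add (hpos x), ← Real.rpow_add (hpos x)]
        congr 1
        ring
      have e2 : |h' x| = |deriv f x| * (α/2) * f x ^ (α/2-1) := by
        rw [hh'def]
        simp only
        rw [abs_mul, abs_mul, abs_of_nonneg (by positivity : (0:ℝ) ≤ α/2),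
          abs_of_nonneg (Real.rpow_nonneg (hpos x).le _)]
      have e3 : |g' x| = |deriv f x| * (1-α) * f x ^ ((1:ℝ)-α-1) := by
        rw [hg'def]
        simp only
        rw [abs_mul, abs_mul, abs_of_nonneg (by linarith : (0:ℝ) ≤ 1-α),
          abs_of_nonneg (Real.rpow_nonneg (hpos x).le _)]
      rw [e3, e2, hudef, hc₀def]
      simp only
      rw [← e]
      field_simp
    have hAcs : A ≤ c₀ * (Real.sqrt (∫ x in (0:ℝ)..1, u x ^ 2) * Real.sqrt D) := by
      have e4 : A = c₀ * ∫ x in (0:ℝ)..1, u x * |h' x| := by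
        rw [hAdef, ← intervalIntegral.integral_const_mul]
        exact intervalIntegral.integral_congr fun x _ => hid x
      have e5 : (∫ x in (0:ℝ)..1, |h' x| ^ 2) = D := by
        rw [hDdef]
        exact intervalIntegral.integral_congr fun x _ => sq_abs _
      have := my_cs u (fun x => |h' x|) hucont hh'cont.abs hu0 (fun x => abs_nonneg _)
      rw [e5] at this
      rw [e4]
      exact mul_le_mul_of_nonneg_left this hc₀pos.le
    have hM'0 : (0:ℝ) ≤ M^(1-2*α) := Real.rpow_nonneg hM.le _
    have hJ : (∫ x in (0:ℝ)..1, u x ^ 2) ≤ B * M^(1-2*α) := by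
      have e6 : (∫ x in (0:ℝ)..1, u x ^ 2) = ∫ x in (0:ℝ)..1, f x ^ ((1:ℝ)-α) * f x ^ (1-2*α) :=
        intervalIntegral.integral_congr fun x _ => hu2 x
      have hcont1 : Continuous fun x => f x ^ ((1:ℝ)-α) * f x ^ (1-2*α) :=
        (hcf.rpow_const fun x => Or.inl (hpos x).ne').mul
          (hcf.rpow_const fun x => Or.inl (hpos x).ne')
      have hcont2 : Continuous fun x => f x ^ ((1:ℝ)-2*α) :=
        hcf.rpow_const fun x => Or.inl (hpos x).ne'
      have h7 : (∫ x in (0:ℝ)..1, f x ^ ((1:ℝ)-α) * f x ^ (1-2*α)) ≤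
          ∫ x in (0:ℝ)..1, B * f x ^ ((1:ℝ)-2*α) := by
        apply intervalIntegral.integral_mono_on zero_le_one
          (hcont1.intervalIntegrable _ _) ((continuous_const.mul hcont2).intervalIntegrable _ _)
        intro x hxm
        exact mul_le_mul_of_nonneg_right (hgbound x hxm) (Real.rpow_nonneg (hpos x).le _)
      have h8 : (∫ x in (0:ℝ)..1, f x ^ ((1:ℝ)-2*α)) ≤ M^(1-2*α) := by
        have := my_jensen f hcf (fun x => (hpos x).le) (β := 1-2*α)
          (by linarith) (by linarith)
        have h9 : (∫ x in (0:ℝ)..1, f x) ^ ((1:ℝ)-2*α) ≤ M^(1-2*α) :=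
          Real.rpow_le_rpow hintf0 hintM (by linarith)
        linarith
      rw [e6]
      calc (∫ x in (0:ℝ)..1, f x ^ ((1:ℝ)-α) * f x ^ (1-2*α)) ≤
          ∫ x in (0:ℝ)..1, B * f x ^ ((1:ℝ)-2*α) := h7
        _ = B * ∫ x in (0:ℝ)..1, f x ^ ((1:ℝ)-2*α) := intervalIntegral.integral_const_mul _ _
        _ ≤ B * M^(1-2*α) := mul_le_mul_of_nonneg_left h8 hB0.le
    have hA2 : A ≤ c₀ * (Real.sqrt B * Real.sqrt (M^(1-2*α)) * Real.sqrt D) := by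
      refine hAcs.trans ?_
      rw [← Real.sqrt_mul hB0.le]
      refine mul_le_mul_of_nonneg_left ?_ hc₀pos.le
      exact mul_le_mul_of_nonneg_right (Real.sqrt_le_sqrt hJ) (Real.sqrt_nonneg D)
    have habs : B ≤ 2*M^(1-α) + 4*c₀^2*M^(1-2*α)*D := by
      have hsb : Real.sqrt B ^ 2 = B := Real.sq_sqrt hB0.le
      have hsd : Real.sqrt D ^ 2 = D := Real.sq_sqrt hD0
      have hsm : Real.sqrt (M^(1-2*α)) ^ 2 = M^(1-2*α) := Real.sq_sqrt hM'0
      have hprod : (Real.sqrt (M^(1-2*α)) * Real.sqrt D)^2 = M^(1-2*α) * D := by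
        rw [mul_pow, hsm, hsd]
      have hBle : B ≤ M^(1-α) + c₀ * (Real.sqrt B * Real.sqrt (M^(1-2*α)) * Real.sqrt D) := by
        rw [hBdef]
        linarith
      have hm0 : (0:ℝ) < M^(1-α) := by positivity
      nlinarith [sq_nonneg (Real.sqrt B - 2*c₀*(Real.sqrt (M^(1-2*α)) * Real.sqrt D)),
        mul_nonneg (mul_nonneg hc₀pos.le hc₀pos.le) (mul_nonneg hM'0 hD0),
        Real.sqrt_nonneg B, Real.sqrt_nonneg D, Real.sqrt_nonneg (M^(1-2*α))]
    have hpoint : ∀ x ∈ Icc (0:ℝ) 1, f x ^ (2-α) ≤ f x * B := by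
      intro x hxm
      have e5 : f x ^ (2-α) = f x * f x ^ ((1:ℝ)-α) := by
        rw [show (2-α) = 1 + (1-α) by ring, Real.rpow_add (hpos x), Real.rpow_one]
      rw [e5]
      exact mul_le_mul_of_nonneg_left (hgbound x hxm) (hpos x).le
    rw [hDeq]
    have hcont2α : Continuous fun x => f x ^ (2-α) :=
      hcf.rpow_const fun x => Or.inl (hpos x).ne'
    calc (∫ x in (0:ℝ)..1, f x ^ (2-α))
        ≤ ∫ x in (0:ℝ)..1, f x * B :=
          intervalIntegral.integral_mono_on zero_le_one (hcont2α.intervalIntegrable _ _)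
            ((hcf.mul continuous_const).intervalIntegrable _ _) hpoint
      _ = (∫ x in (0:ℝ)..1, f x) * B := intervalIntegral.integral_mul_const _ _
      _ ≤ M * B := mul_le_mul_of_nonneg_right hintM hB0.le
      _ ≤ M * (2*M^(1-α) + 4*c₀^2*M^(1-2*α)*D) := mul_le_mul_of_nonneg_left habs hM.le
      _ = 2*M*M^(1-α) + 4*M*c₀^2*M^(1-2*α)*D := by ring


/-- Interpolation estimate: if `S > 0` is smooth with mass bounded by `M` and
`∫₀ᵀ∫_𝕋 |∂ₓ(S^(α/2))|² ≤ K₀`, then `∫₀ᵀ∫_𝕋 S^(2-α) ≤ C` with `C = C(α, T, M, K₀)`. -/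
theorem interpolation_estimate (α T M K₀ : ℝ) (hα : 0 < α) (hα1 : α < 1)
    (hT : 0 < T) (hM : 0 < M) (hK₀ : 0 < K₀) :
    ∃ C : ℝ, ∀ S : ℝ → ℝ → ℝ,
      ContDiff ℝ (⊤ : ℕ∞) (Function.uncurry S) →
      (∀ t, Function.Periodic (S t) 1) →
      (∀ t x, 0 < S t x) →
      (∀ t ∈ Set.Icc (0:ℝ) T, (∫ x in (0:ℝ)..1, S t x) ≤ M) →
      (∫ t in (0:ℝ)..T, ∫ x in (0:ℝ)..1,
          (deriv (fun y => S t y ^ (α / 2)) x) ^ 2) ≤ K₀ →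
      (∫ t in (0:ℝ)..T, ∫ x in (0:ℝ)..1, S t x ^ (2 - α)) ≤ C := by
  obtain ⟨a, b, ha0, hb0, hkey⟩ := my_key α M hα hα1 hM
  refine ⟨a * T + b * K₀, ?_⟩
  intro S hS _hper hpos hmass hdiss
  have hScont : Continuous (Function.uncurry S) := hS.continuous
  -- each slice is smooth
  have hft : ∀ t, ContDiff ℝ (⊤ : ℕ∞) (fun x => S t x) := fun t =>
    by have := hS.comp (ContDiff.prodMk (contDiff_const (c := t)) contDiff_id); exact this
  -- joint continuity of the spatial derivative
  set G : ℝ × ℝ → ℝ := fun p => fderiv ℝ (Function.uncurry S) p (0, 1) with hGdef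
  have hGcont : Continuous G :=
    (hS.continuous_fderiv (by simp)).clm_apply continuous_const
  have hGderiv : ∀ t x, HasDerivAt (fun y => S t y) (G (t, x)) x := by
    intro t x
    have h1 : HasFDerivAt (Function.uncurry S) (fderiv ℝ (Function.uncurry S) (t, x)) (t, x) :=
      (hS.differentiable (by simp) (t, x)).hasFDerivAt
    have h2 : HasDerivAt (fun y => ((t, y) : ℝ × ℝ)) ((0, 1) : ℝ × ℝ) x :=
      (hasDerivAt_const x t).prodMk (hasDerivAt_id x)
    exact h1.comp_hasDerivAt x h2
  -- derivative of the rpow slice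
  have hderiv : ∀ t x, deriv (fun y => S t y ^ (α / 2)) x =
      G (t, x) * (α / 2) * S t x ^ (α / 2 - 1) := by
    intro t x
    exact ((hGderiv t x).rpow_const (Or.inl (hpos t x).ne')).deriv
  -- continuity in t of the dissipation
  set Ψ : ℝ → ℝ := fun t => ∫ x in (0:ℝ)..1,
      (G (t, x) * (α / 2) * S t x ^ (α / 2 - 1)) ^ 2 with hΨdef
  have hΨeq : ∀ t, (∫ x in (0:ℝ)..1, (deriv (fun y => S t y ^ (α / 2)) x) ^ 2) = Ψ t := by
    intro t
    exact intervalIntegral.integral_congr fun x _ => by rw [hderiv t x]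
  have hΨcont : Continuous Ψ := by
    apply intervalIntegral.continuous_parametric_intervalIntegral_of_continuous'
    have : Continuous fun p : ℝ × ℝ => (G p * (α / 2) * Function.uncurry S p ^ (α / 2 - 1)) ^ 2 :=
      (((hGcont.mul continuous_const).mul
        (hScont.rpow_const fun p => Or.inl (hpos p.1 p.2).ne')).pow 2)
    exact this
  -- continuity in t of the quantity to bound
  set Φ : ℝ → ℝ := fun t => ∫ x in (0:ℝ)..1, S t x ^ (2 - α) with hΦdef
  have hΦcont : Continuous Φ := by
    apply intervalIntegral.continuous_parametric_intervalIntegral_of_continuous'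
    have : Continuous fun p : ℝ × ℝ => Function.uncurry S p ^ (2 - α) :=
      hScont.rpow_const fun p => Or.inl (hpos p.1 p.2).ne'
    exact this
  -- pointwise in t bound
  have hbound : ∀ t ∈ Icc (0:ℝ) T, Φ t ≤ a + b * Ψ t := by
    intro t ht
    have := hkey (fun x => S t x) (hft t) (fun x => hpos t x) (hmass t ht)
    rw [hΨeq t] at this
    exact this
  -- integrate in t
  have hΨ0 : ∀ t, 0 ≤ Ψ t := fun t =>
    intervalIntegral.integral_nonneg zero_le_one fun x _ => sq_nonneg _
  have hdiss' : (∫ t in (0:ℝ)..T, Ψ t) ≤ K₀ := by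
    have : (∫ t in (0:ℝ)..T, ∫ x in (0:ℝ)..1,
        (deriv (fun y => S t y ^ (α / 2)) x) ^ 2) = ∫ t in (0:ℝ)..T, Ψ t :=
      intervalIntegral.integral_congr fun t _ => hΨeq t
    linarith [hdiss, this.symm.le, this.le]
  calc (∫ t in (0:ℝ)..T, ∫ x in (0:ℝ)..1, S t x ^ (2 - α))
      = ∫ t in (0:ℝ)..T, Φ t := rfl
    _ ≤ ∫ t in (0:ℝ)..T, (a + b * Ψ t) :=
        intervalIntegral.integral_mono_on hT.le (hΦcont.intervalIntegrable _ _)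
          ((continuous_const.add (continuous_const.mul hΨcont)).intervalIntegrable _ _) hbound
    _ = a * T + b * ∫ t in (0:ℝ)..T, Ψ t := by
        rw [intervalIntegral.integral_add (f := fun _ => a) (g := fun t => b * Ψ t) (continuous_const.intervalIntegrable _ _)
          ((continuous_const.mul hΨcont).intervalIntegrable _ _),
          intervalIntegral.integral_const, intervalIntegral.integral_const_mul]
        simp [mul_comm]
    _ ≤ a * T + b * K₀ := by
        have := mul_le_mul_of_nonneg_left hdiss' hb0
        linarith
end
end
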